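/- Let Γ be a multiset of D-formulas and let G be a G-formula. Suppose Γ → G has an I_G-proof Ξ in which an ∨-L rule with upper sequents B,Σ → F and D,Σ → F and lower sequent B∨D,Σ → F appears. Then D,Σ → G has an I_G-proof in which there are fewer occurrences of the ∨-L rule than in Ξ. -/

import Mathlib

set_option maxHeartbeats 1000000

/-- Terms of a first-order language: variables (de Bruijn indices for
quantified variables) and constants. -/
inductive Tm : Type
  | var : ℕ → Tm
  | const : ℕ → Tm

namespace Tm

/-- Substitution of the term `u` for the variable with index `k`. -/
def subst (k : ℕ) (u : Tm) : Tm → Tm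
  | var n => if n = k then u else var n
  | const c => const c

/-- The constant `c` occurs in a term. -/
def constIn (c : ℕ) : Tm → Prop
  | var _ => False
  | const d => d = c

end Tm

/-- First-order formulas over the primitives ⊤, ⊥, ∧, ∨, ⊃, ∃, ∀.
Quantifiers are represented with de Bruijn indices. -/
inductive Fm : Type
  | top : Fm
  | bot : Fm
  | atom : ℕ → List Tm → Fm
  | conj : Fm → Fm → Fm
  | disj : Fm → Fm → Fm
  | imp : Fm → Fm → Fm
  | ex : Fm → Fm
  | all : Fm → Fm

namespace Fm

/-- Substitution of a term for the variable with de Bruijn index `k`. -/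
def subst (k : ℕ) (u : Tm) : Fm → Fm
  | top => top
  | bot => bot
  | atom p ts => atom p (ts.map (Tm.subst k u))
  | conj a b => conj (subst k u a) (subst k u b)
  | disj a b => disj (subst k u a) (subst k u b)
  | imp a b => imp (subst k u a) (subst k u b)
  | ex a => ex (subst (k + 1) u a)
  | all a => all (subst (k + 1) u a)

/-- `[t/x]B`: instantiation of the outermost bound variable of the body of a
quantified formula with the term `u`. -/
def inst (u : Tm) (a : Fm) : Fm := subst 0 u a

/-- Atomic formulas (⊤ and ⊥ are *not* atomic). -/
def isAtom : Fm → Prop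
  | atom _ _ => True
  | _ => False

/-- Formulas that need no right-introduction rule in a uniform/O_G proof:
atomic formulas and ⊥. -/
def neutral (F : Fm) : Prop := F.isAtom ∨ F = bot

/-- The constant `c` occurs in a formula. -/
def constIn (c : ℕ) : Fm → Prop
  | top => False
  | bot => False
  | atom _ ts => ∃ t ∈ ts, t.constIn c
  | conj a b => constIn c a ∨ constIn c b
  | disj a b => constIn c a ∨ constIn c b
  | imp a b => constIn c a ∨ constIn c b
  | ex a => constIn c a
  | all a => constIn c a

end Fm

/-- The eigenvariable (constant) `c` does not occur in the sequent `Γ → Δ`. -/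
def FreshSeq (c : ℕ) (Γ Δ : Multiset Fm) : Prop :=
  (∀ F ∈ Γ, ¬ F.constIn c) ∧ ∀ F ∈ Δ, ¬ F.constIn c

/-- The sequent `Γ → Δ` is an axiom: ⊤ ∈ Δ, or some `A` that is ⊥ or atomic
belongs to both `Γ` and `Δ`. -/
def AxSeq (Γ Δ : Multiset Fm) : Prop :=
  Fm.top ∈ Δ ∨ ∃ A : Fm, (A = Fm.bot ∨ A.isAtom) ∧ A ∈ Γ ∧ A ∈ Δ

/-- C-proofs: arbitrary derivations in the sequent calculus of the paper.
Sequents are pairs of multisets of formulas. -/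
inductive CProof : Multiset Fm → Multiset Fm → Type
  | ax {Γ Δ : Multiset Fm} (h : AxSeq Γ Δ) : CProof Γ Δ
  | contrL {B : Fm} {Γ Δ : Multiset Fm} (p : CProof (B ::ₘ B ::ₘ Γ) Δ) : CProof (B ::ₘ Γ) Δ
  | contrR {B : Fm} {Γ Δ : Multiset Fm} (p : CProof Γ (B ::ₘ B ::ₘ Δ)) : CProof Γ (B ::ₘ Δ)
  | botR {D : Fm} {Γ Δ : Multiset Fm} (p : CProof Γ (Fm.bot ::ₘ Δ)) : CProof Γ (D ::ₘ Δ)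
  | andL {B D : Fm} {Γ Δ : Multiset Fm} (p : CProof (B ::ₘ D ::ₘ (B.conj D) ::ₘ Γ) Δ) :
      CProof ((B.conj D) ::ₘ Γ) Δ
  | andR {B D : Fm} {Γ Δ : Multiset Fm} (p : CProof Γ (B ::ₘ Δ)) (q : CProof Γ (D ::ₘ Δ)) :
      CProof Γ ((B.conj D) ::ₘ Δ)
  | orL {B D : Fm} {Γ Δ : Multiset Fm} (p : CProof (B ::ₘ Γ) Δ) (q : CProof (D ::ₘ Γ) Δ) :
      CProof ((B.disj D) ::ₘ Γ) Δ
  | orR1 {B D : Fm} {Γ Δ : Multiset Fm} (p : CProof Γ (B ::ₘ Δ)) : CProof Γ ((B.disj D) ::ₘ Δ)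
  | orR2 {B D : Fm} {Γ Δ : Multiset Fm} (p : CProof Γ (D ::ₘ Δ)) : CProof Γ ((B.disj D) ::ₘ Δ)
  | impL {B D : Fm} {Γ Δ Θ : Multiset Fm} (p : CProof ((B.imp D) ::ₘ Γ) (B ::ₘ Δ))
      (q : CProof (D ::ₘ Γ) Θ) : CProof ((B.imp D) ::ₘ Γ) (Δ + Θ)
  | impR {B D : Fm} {Γ Δ : Multiset Fm} (p : CProof (B ::ₘ Γ) (D ::ₘ Δ)) :
      CProof Γ ((B.imp D) ::ₘ Δ)
  | allL {B : Fm} {Γ Δ : Multiset Fm} (t : Tm)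
      (p : CProof ((B.inst t) ::ₘ (Fm.all B) ::ₘ Γ) Δ) : CProof ((Fm.all B) ::ₘ Γ) Δ
  | exR {B : Fm} {Γ Δ : Multiset Fm} (t : Tm) (p : CProof Γ ((B.inst t) ::ₘ Δ)) :
      CProof Γ ((Fm.ex B) ::ₘ Δ)
  | exL {B : Fm} {Γ Δ : Multiset Fm} (c : ℕ) (hc : FreshSeq c ((Fm.ex B) ::ₘ Γ) Δ)
      (p : CProof ((B.inst (Tm.const c)) ::ₘ Γ) Δ) : CProof ((Fm.ex B) ::ₘ Γ) Δ
  | allR {B : Fm} {Γ Δ : Multiset Fm} (c : ℕ) (hc : FreshSeq c Γ ((Fm.all B) ::ₘ Δ))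
      (p : CProof Γ ((B.inst (Tm.const c)) ::ₘ Δ)) : CProof Γ ((Fm.all B) ::ₘ Δ)

namespace CProof

/-- An I-proof is a C-proof in which every sequent has exactly one formula in
its succedent. -/
def isI : ∀ (Γ Δ : Multiset Fm), CProof Γ Δ → Prop
  | _, _, @ax _ Δ _ => Multiset.card Δ = 1
  | _, _, @contrL _ _ Δ p => Multiset.card Δ = 1 ∧ isI _ _ p
  | _, _, @contrR B _ Δ p => Multiset.card (B ::ₘ Δ) = 1 ∧ isI _ _ p
  | _, _, @botR D _ Δ p => Multiset.card (D ::ₘ Δ) = 1 ∧ isI _ _ p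
  | _, _, @andL _ _ _ Δ p => Multiset.card Δ = 1 ∧ isI _ _ p
  | _, _, @andR B D _ Δ p q => Multiset.card ((B.conj D) ::ₘ Δ) = 1 ∧ isI _ _ p ∧ isI _ _ q
  | _, _, @orL _ _ _ Δ p q => Multiset.card Δ = 1 ∧ isI _ _ p ∧ isI _ _ q
  | _, _, @orR1 B D _ Δ p => Multiset.card ((B.disj D) ::ₘ Δ) = 1 ∧ isI _ _ p
  | _, _, @orR2 B D _ Δ p => Multiset.card ((B.disj D) ::ₘ Δ) = 1 ∧ isI _ _ p
  | _, _, @impL _ _ _ Δ Θ p q => Multiset.card (Δ + Θ) = 1 ∧ isI _ _ p ∧ isI _ _ q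
  | _, _, @impR B D _ Δ p => Multiset.card ((B.imp D) ::ₘ Δ) = 1 ∧ isI _ _ p
  | _, _, @allL _ _ Δ _ p => Multiset.card Δ = 1 ∧ isI _ _ p
  | _, _, @exR B _ Δ _ p => Multiset.card ((Fm.ex B) ::ₘ Δ) = 1 ∧ isI _ _ p
  | _, _, @exL _ _ Δ _ _ p => Multiset.card Δ = 1 ∧ isI _ _ p
  | _, _, @allR B _ Δ _ _ p => Multiset.card ((Fm.all B) ::ₘ Δ) = 1 ∧ isI _ _ p

end CProof

/-- Classical provability: `Γ ⊢_C F`. -/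
def CProv (Γ : Multiset Fm) (F : Fm) : Prop := Nonempty (CProof Γ ({F} : Multiset Fm))

/-- Intuitionistic provability: `Γ ⊢_I F`. -/
def IProv (Γ : Multiset Fm) (F : Fm) : Prop := ∃ p : CProof Γ ({F} : Multiset Fm), p.isI

namespace CProof

open Classical in
/-- The nonconstructiveness measure of a C-proof: the number of
nonconstructive occurrences of ∨-L and ⊃-R rules in it. -/
noncomputable def mu : ∀ (Γ Δ : Multiset Fm), CProof Γ Δ → ℕ
  | _, _, ax _ => 0
  | _, _, contrL p => mu _ _ p
  | _, _, contrR p => mu _ _ p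
  | _, _, botR p => mu _ _ p
  | _, _, andL p => mu _ _ p
  | _, _, andR p q => mu _ _ p + mu _ _ q
  | _, _, @orL B D Γ Δ p q =>
      mu _ _ p + mu _ _ q +
        (if ∃ F ∈ Δ, IProv (B ::ₘ Γ) F ∧ IProv (D ::ₘ Γ) F then 0 else 1)
  | _, _, orR1 p => mu _ _ p
  | _, _, orR2 p => mu _ _ p
  | _, _, impL p q => mu _ _ p + mu _ _ q
  | _, _, @impR B D Γ _ p => mu _ _ p + (if IProv (B ::ₘ Γ) D then 0 else 1)
  | _, _, allL _ p => mu _ _ p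
  | _, _, exR _ p => mu _ _ p
  | _, _, exL _ _ p => mu _ _ p
  | _, _, allR _ _ p => mu _ _ p

/-- The sequent `S → P` appears in the given C-proof. -/
def occursSeq : ∀ (Γ Δ : Multiset Fm), CProof Γ Δ → Multiset Fm → Multiset Fm → Prop
  | _, _, @ax Γ Δ _, S, P => Γ = S ∧ Δ = P
  | _, _, @contrL B Γ Δ p, S, P => ((B ::ₘ Γ) = S ∧ Δ = P) ∨ occursSeq _ _ p S P
  | _, _, @contrR B Γ Δ p, S, P => (Γ = S ∧ (B ::ₘ Δ) = P) ∨ occursSeq _ _ p S P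
  | _, _, @botR D Γ Δ p, S, P => (Γ = S ∧ (D ::ₘ Δ) = P) ∨ occursSeq _ _ p S P
  | _, _, @andL B D Γ Δ p, S, P => (((B.conj D) ::ₘ Γ) = S ∧ Δ = P) ∨ occursSeq _ _ p S P
  | _, _, @andR B D Γ Δ p q, S, P =>
      (Γ = S ∧ ((B.conj D) ::ₘ Δ) = P) ∨ occursSeq _ _ p S P ∨ occursSeq _ _ q S P
  | _, _, @orL B D Γ Δ p q, S, P =>
      (((B.disj D) ::ₘ Γ) = S ∧ Δ = P) ∨ occursSeq _ _ p S P ∨ occursSeq _ _ q S P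
  | _, _, @orR1 B D Γ Δ p, S, P => (Γ = S ∧ ((B.disj D) ::ₘ Δ) = P) ∨ occursSeq _ _ p S P
  | _, _, @orR2 B D Γ Δ p, S, P => (Γ = S ∧ ((B.disj D) ::ₘ Δ) = P) ∨ occursSeq _ _ p S P
  | _, _, @impL B D Γ Δ Θ p q, S, P =>
      (((B.imp D) ::ₘ Γ) = S ∧ (Δ + Θ) = P) ∨ occursSeq _ _ p S P ∨ occursSeq _ _ q S P
  | _, _, @impR B D Γ Δ p, S, P => (Γ = S ∧ ((B.imp D) ::ₘ Δ) = P) ∨ occursSeq _ _ p S P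
  | _, _, @allL B Γ Δ _ p, S, P => (((Fm.all B) ::ₘ Γ) = S ∧ Δ = P) ∨ occursSeq _ _ p S P
  | _, _, @exR B Γ Δ _ p, S, P => (Γ = S ∧ ((Fm.ex B) ::ₘ Δ) = P) ∨ occursSeq _ _ p S P
  | _, _, @exL B Γ Δ _ _ p, S, P => (((Fm.ex B) ::ₘ Γ) = S ∧ Δ = P) ∨ occursSeq _ _ p S P
  | _, _, @allR B Γ Δ _ _ p, S, P => (Γ = S ∧ ((Fm.all B) ::ₘ Δ) = P) ∨ occursSeq _ _ p S P

/-- `hasImpR p B S P D` holds when an ⊃-R rule with upper sequent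
`B,S → P,D` and lower sequent `S → P,B⊃D` occurs in the proof `p`. -/
def hasImpR : ∀ (Γ Δ : Multiset Fm), CProof Γ Δ → Fm → Multiset Fm → Multiset Fm → Fm → Prop
  | _, _, ax _, _, _, _, _ => False
  | _, _, contrL p, B, S, P, D => hasImpR _ _ p B S P D
  | _, _, contrR p, B, S, P, D => hasImpR _ _ p B S P D
  | _, _, botR p, B, S, P, D => hasImpR _ _ p B S P D
  | _, _, andL p, B, S, P, D => hasImpR _ _ p B S P D
  | _, _, andR p q, B, S, P, D => hasImpR _ _ p B S P D ∨ hasImpR _ _ q B S P D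
  | _, _, orL p q, B, S, P, D => hasImpR _ _ p B S P D ∨ hasImpR _ _ q B S P D
  | _, _, orR1 p, B, S, P, D => hasImpR _ _ p B S P D
  | _, _, orR2 p, B, S, P, D => hasImpR _ _ p B S P D
  | _, _, impL p q, B, S, P, D => hasImpR _ _ p B S P D ∨ hasImpR _ _ q B S P D
  | _, _, @impR B' D' Γ' Δ' p, B, S, P, D =>
      (B' = B ∧ Γ' = S ∧ Δ' = P ∧ D' = D) ∨ hasImpR _ _ p B S P D
  | _, _, allL _ p, B, S, P, D => hasImpR _ _ p B S P D
  | _, _, exR _ p, B, S, P, D => hasImpR _ _ p B S P D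
  | _, _, exL _ _ p, B, S, P, D => hasImpR _ _ p B S P D
  | _, _, allR _ _ p, B, S, P, D => hasImpR _ _ p B S P D

/-- `hasOrL p B D S P` holds when an ∨-L rule with upper sequents
`B,S → P` and `D,S → P` and lower sequent `B∨D,S → P` occurs in `p`. -/
def hasOrL : ∀ (Γ Δ : Multiset Fm), CProof Γ Δ → Fm → Fm → Multiset Fm → Multiset Fm → Prop
  | _, _, ax _, _, _, _, _ => False
  | _, _, contrL p, B, D, S, P => hasOrL _ _ p B D S P
  | _, _, contrR p, B, D, S, P => hasOrL _ _ p B D S P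
  | _, _, botR p, B, D, S, P => hasOrL _ _ p B D S P
  | _, _, andL p, B, D, S, P => hasOrL _ _ p B D S P
  | _, _, andR p q, B, D, S, P => hasOrL _ _ p B D S P ∨ hasOrL _ _ q B D S P
  | _, _, @orL B' D' Γ' Δ' p q, B, D, S, P =>
      (B' = B ∧ D' = D ∧ Γ' = S ∧ Δ' = P) ∨ hasOrL _ _ p B D S P ∨ hasOrL _ _ q B D S P
  | _, _, orR1 p, B, D, S, P => hasOrL _ _ p B D S P
  | _, _, orR2 p, B, D, S, P => hasOrL _ _ p B D S P
  | _, _, impL p q, B, D, S, P => hasOrL _ _ p B D S P ∨ hasOrL _ _ q B D S P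
  | _, _, impR p, B, D, S, P => hasOrL _ _ p B D S P
  | _, _, allL _ p, B, D, S, P => hasOrL _ _ p B D S P
  | _, _, exR _ p, B, D, S, P => hasOrL _ _ p B D S P
  | _, _, exL _ _ p, B, D, S, P => hasOrL _ _ p B D S P
  | _, _, allR _ _ p, B, D, S, P => hasOrL _ _ p B D S P

/-- Every formula in `Δ` is atomic or ⊥. -/
def neutralM (Δ : Multiset Fm) : Prop := ∀ F ∈ Δ, F.neutral

/-- A uniform proof: an I-proof in which any sequent whose succedent contains
a non-atomic formula occurs only as the lower sequent of an inference rule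
that introduces the top-level logical symbol of that formula. -/
def isUniform : ∀ (Γ Δ : Multiset Fm), CProof Γ Δ → Prop
  | _, _, @ax _ Δ _ => Multiset.card Δ = 1
  | _, _, @contrL _ _ Δ p => Multiset.card Δ = 1 ∧ neutralM Δ ∧ isUniform _ _ p
  | _, _, @contrR B _ Δ p =>
      Multiset.card (B ::ₘ Δ) = 1 ∧ neutralM (B ::ₘ Δ) ∧ isUniform _ _ p
  | _, _, @botR D _ Δ p =>
      Multiset.card (D ::ₘ Δ) = 1 ∧ neutralM (D ::ₘ Δ) ∧ isUniform _ _ p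
  | _, _, @andL _ _ _ Δ p => Multiset.card Δ = 1 ∧ neutralM Δ ∧ isUniform _ _ p
  | _, _, @andR B D _ Δ p q =>
      Multiset.card ((B.conj D) ::ₘ Δ) = 1 ∧ isUniform _ _ p ∧ isUniform _ _ q
  | _, _, @orL _ _ _ Δ p q =>
      Multiset.card Δ = 1 ∧ neutralM Δ ∧ isUniform _ _ p ∧ isUniform _ _ q
  | _, _, @orR1 B D _ Δ p => Multiset.card ((B.disj D) ::ₘ Δ) = 1 ∧ isUniform _ _ p
  | _, _, @orR2 B D _ Δ p => Multiset.card ((B.disj D) ::ₘ Δ) = 1 ∧ isUniform _ _ p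
  | _, _, @impL _ _ _ Δ Θ p q =>
      Multiset.card (Δ + Θ) = 1 ∧ neutralM (Δ + Θ) ∧ isUniform _ _ p ∧ isUniform _ _ q
  | _, _, @impR B D _ Δ p => Multiset.card ((B.imp D) ::ₘ Δ) = 1 ∧ isUniform _ _ p
  | _, _, @allL _ _ Δ _ p => Multiset.card Δ = 1 ∧ neutralM Δ ∧ isUniform _ _ p
  | _, _, @exR B _ Δ _ p => Multiset.card ((Fm.ex B) ::ₘ Δ) = 1 ∧ isUniform _ _ p
  | _, _, @exL _ _ Δ _ _ p => Multiset.card Δ = 1 ∧ neutralM Δ ∧ isUniform _ _ p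
  | _, _, @allR B _ Δ _ _ p => Multiset.card ((Fm.all B) ::ₘ Δ) = 1 ∧ isUniform _ _ p

end CProof

/-- Uniform provability: `Γ ⊢_O F`. -/
def UProv (Γ : Multiset Fm) (F : Fm) : Prop :=
  ∃ p : CProof Γ ({F} : Multiset Fm), p.isUniform

/-- The ordering ⪰ measuring the strength of formulas as assumptions. -/
inductive Fm.ge : Fm → Fm → Prop
  | refl (F : Fm) : Fm.ge F F
  | imp {F A B : Fm} : Fm.ge F B → Fm.ge F (Fm.imp A B)
  | disjl {F A B : Fm} : Fm.ge F A → Fm.ge F (Fm.disj A B)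
  | disjr {F A B : Fm} : Fm.ge F B → Fm.ge F (Fm.disj A B)
  | ex {F P : Fm} (c : ℕ) : Fm.ge F (P.inst (Tm.const c)) → Fm.ge F (Fm.ex P)

/-- `MsGe Γ₁ Γ₂`: there is an injective map κ from `Γ₂` into `Γ₁` with
`κ(F) ⪰ F` for every `F ∈ Γ₂`. -/
def MsGe (Γ₁ Γ₂ : Multiset Fm) : Prop :=
  ∃ Γ' ≤ Γ₁, Multiset.Rel Fm.ge Γ' Γ₂

mutual
  /-- G-formulas: G ::= ⊤ | ⊥ | A | G∧G | G∨G | D⊃G | ∃x G. -/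
  inductive GFm : Fm → Prop
    | top : GFm Fm.top
    | bot : GFm Fm.bot
    | atom {p : ℕ} {ts : List Tm} : GFm (Fm.atom p ts)
    | conj {a b : Fm} : GFm a → GFm b → GFm (Fm.conj a b)
    | disj {a b : Fm} : GFm a → GFm b → GFm (Fm.disj a b)
    | imp {a b : Fm} : DFm a → GFm b → GFm (Fm.imp a b)
    | ex {a : Fm} : GFm a → GFm (Fm.ex a)

  /-- D-formulas: D ::= ⊤ | ⊥ | A | G⊃D | D∧D | D∨D | ∃x D | ∀x D. -/
  inductive DFm : Fm → Prop
    | top : DFm Fm.top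
    | bot : DFm Fm.bot
    | atom {p : ℕ} {ts : List Tm} : DFm (Fm.atom p ts)
    | imp {a b : Fm} : GFm a → DFm b → DFm (Fm.imp a b)
    | conj {a b : Fm} : DFm a → DFm b → DFm (Fm.conj a b)
    | disj {a b : Fm} : DFm a → DFm b → DFm (Fm.disj a b)
    | ex {a : Fm} : DFm a → DFm (Fm.ex a)
    | all {a : Fm} : DFm a → DFm (Fm.all a)
end
/-- I_G-proofs: derivations in the intuitionistic sequent calculus (single
succedent formula) augmented with the derived rules ∨-L_G and res_G, in which
the eigenvariable proviso on ∃-L and ∀-R also disallows constants in `G`. -/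
inductive IGProof (G : Fm) : Multiset Fm → Fm → Type
  | ax {Γ : Multiset Fm} {F : Fm} (h : AxSeq Γ ({F} : Multiset Fm)) : IGProof G Γ F
  | contrL {B : Fm} {Γ : Multiset Fm} {F : Fm} (p : IGProof G (B ::ₘ B ::ₘ Γ) F) :
      IGProof G (B ::ₘ Γ) F
  | botR {Γ : Multiset Fm} {F : Fm} (p : IGProof G Γ Fm.bot) : IGProof G Γ F
  | andL {B D : Fm} {Γ : Multiset Fm} {F : Fm}
      (p : IGProof G (B ::ₘ D ::ₘ (B.conj D) ::ₘ Γ) F) : IGProof G ((B.conj D) ::ₘ Γ) F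
  | andR {B D : Fm} {Γ : Multiset Fm} (p : IGProof G Γ B) (q : IGProof G Γ D) :
      IGProof G Γ (B.conj D)
  | orL {B D : Fm} {Γ : Multiset Fm} {F : Fm} (p : IGProof G (B ::ₘ Γ) F)
      (q : IGProof G (D ::ₘ Γ) F) : IGProof G ((B.disj D) ::ₘ Γ) F
  | orR1 {B D : Fm} {Γ : Multiset Fm} (p : IGProof G Γ B) : IGProof G Γ (B.disj D)
  | orR2 {B D : Fm} {Γ : Multiset Fm} (p : IGProof G Γ D) : IGProof G Γ (B.disj D)
  | impL {B D : Fm} {Γ : Multiset Fm} {F : Fm} (p : IGProof G ((B.imp D) ::ₘ Γ) B)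
      (q : IGProof G (D ::ₘ Γ) F) : IGProof G ((B.imp D) ::ₘ Γ) F
  | impR {B D : Fm} {Γ : Multiset Fm} (p : IGProof G (B ::ₘ Γ) D) : IGProof G Γ (B.imp D)
  | allL {B : Fm} {Γ : Multiset Fm} {F : Fm} (t : Tm)
      (p : IGProof G ((B.inst t) ::ₘ (Fm.all B) ::ₘ Γ) F) : IGProof G ((Fm.all B) ::ₘ Γ) F
  | exR {B : Fm} {Γ : Multiset Fm} (t : Tm) (p : IGProof G Γ (B.inst t)) :
      IGProof G Γ (Fm.ex B)
  | exL {B : Fm} {Γ : Multiset Fm} {F : Fm} (c : ℕ)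
      (hc : FreshSeq c ((Fm.ex B) ::ₘ Γ) ({F} : Multiset Fm)) (hG : ¬ G.constIn c)
      (p : IGProof G ((B.inst (Tm.const c)) ::ₘ Γ) F) : IGProof G ((Fm.ex B) ::ₘ Γ) F
  | allR {B : Fm} {Γ : Multiset Fm} (c : ℕ)
      (hc : FreshSeq c Γ ({Fm.all B} : Multiset Fm)) (hG : ¬ G.constIn c)
      (p : IGProof G Γ (B.inst (Tm.const c))) : IGProof G Γ (Fm.all B)
  | orLG {B D : Fm} {Γ : Multiset Fm} {F : Fm} (p : IGProof G (B ::ₘ Γ) F)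
      (q : IGProof G (D ::ₘ Γ) G) : IGProof G ((B.disj D) ::ₘ Γ) F
  | resG {Γ : Multiset Fm} {F : Fm} (p : IGProof G Γ G) : IGProof G Γ F

namespace IGProof

/-- The number of occurrences of the ∨-L rule in an I_G-proof. -/
def orLCount : ∀ (G : Fm) (Γ : Multiset Fm) (F : Fm), IGProof G Γ F → ℕ
  | _, _, _, ax _ => 0
  | _, _, _, contrL p => orLCount _ _ _ p
  | _, _, _, botR p => orLCount _ _ _ p
  | _, _, _, andL p => orLCount _ _ _ p
  | _, _, _, andR p q => orLCount _ _ _ p + orLCount _ _ _ q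
  | _, _, _, orL p q => orLCount _ _ _ p + orLCount _ _ _ q + 1
  | _, _, _, orR1 p => orLCount _ _ _ p
  | _, _, _, orR2 p => orLCount _ _ _ p
  | _, _, _, impL p q => orLCount _ _ _ p + orLCount _ _ _ q
  | _, _, _, impR p => orLCount _ _ _ p
  | _, _, _, allL _ p => orLCount _ _ _ p
  | _, _, _, exR _ p => orLCount _ _ _ p
  | _, _, _, exL _ _ _ p => orLCount _ _ _ p
  | _, _, _, allR _ _ _ p => orLCount _ _ _ p
  | _, _, _, orLG p q => orLCount _ _ _ p + orLCount _ _ _ q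
  | _, _, _, resG p => orLCount _ _ _ p

/-- The height of an I_G-proof: the length of its longest branch. -/
def height : ∀ (G : Fm) (Γ : Multiset Fm) (F : Fm), IGProof G Γ F → ℕ
  | _, _, _, ax _ => 1
  | _, _, _, contrL p => height _ _ _ p + 1
  | _, _, _, botR p => height _ _ _ p + 1
  | _, _, _, andL p => height _ _ _ p + 1
  | _, _, _, andR p q => max (height _ _ _ p) (height _ _ _ q) + 1
  | _, _, _, orL p q => max (height _ _ _ p) (height _ _ _ q) + 1
  | _, _, _, orR1 p => height _ _ _ p + 1
  | _, _, _, orR2 p => height _ _ _ p + 1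
  | _, _, _, impL p q => max (height _ _ _ p) (height _ _ _ q) + 1
  | _, _, _, impR p => height _ _ _ p + 1
  | _, _, _, allL _ p => height _ _ _ p + 1
  | _, _, _, exR _ p => height _ _ _ p + 1
  | _, _, _, exL _ _ _ p => height _ _ _ p + 1
  | _, _, _, allR _ _ _ p => height _ _ _ p + 1
  | _, _, _, orLG p q => max (height _ _ _ p) (height _ _ _ q) + 1
  | _, _, _, resG p => height _ _ _ p + 1

/-- The number of sequents appearing in an I_G-proof. -/
def size : ∀ (G : Fm) (Γ : Multiset Fm) (F : Fm), IGProof G Γ F → ℕ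
  | _, _, _, ax _ => 1
  | _, _, _, contrL p => size _ _ _ p + 1
  | _, _, _, botR p => size _ _ _ p + 1
  | _, _, _, andL p => size _ _ _ p + 1
  | _, _, _, andR p q => size _ _ _ p + size _ _ _ q + 1
  | _, _, _, orL p q => size _ _ _ p + size _ _ _ q + 1
  | _, _, _, orR1 p => size _ _ _ p + 1
  | _, _, _, orR2 p => size _ _ _ p + 1
  | _, _, _, impL p q => size _ _ _ p + size _ _ _ q + 1
  | _, _, _, impR p => size _ _ _ p + 1
  | _, _, _, allL _ p => size _ _ _ p + 1
  | _, _, _, exR _ p => size _ _ _ p + 1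
  | _, _, _, exL _ _ _ p => size _ _ _ p + 1
  | _, _, _, allR _ _ _ p => size _ _ _ p + 1
  | _, _, _, orLG p q => size _ _ _ p + size _ _ _ q + 1
  | _, _, _, resG p => size _ _ _ p + 1

/-- O_G-proofs: I_G-proofs containing no occurrence of the ∨-L rule, in which
any sequent whose succedent contains a non-atomic formula occurs only as the
lower sequent of a rule introducing the top-level symbol of that formula. -/
def isOG : ∀ (G : Fm) (Γ : Multiset Fm) (F : Fm), IGProof G Γ F → Prop
  | _, _, _, ax _ => True
  | _, _, _, @contrL _ _ _ F p => F.neutral ∧ isOG _ _ _ p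
  | _, _, _, @botR _ _ F p => F.neutral ∧ isOG _ _ _ p
  | _, _, _, @andL _ _ _ _ F p => F.neutral ∧ isOG _ _ _ p
  | _, _, _, andR p q => isOG _ _ _ p ∧ isOG _ _ _ q
  | _, _, _, orL _ _ => False
  | _, _, _, orR1 p => isOG _ _ _ p
  | _, _, _, orR2 p => isOG _ _ _ p
  | _, _, _, @impL _ _ _ _ F p q => F.neutral ∧ isOG _ _ _ p ∧ isOG _ _ _ q
  | _, _, _, impR p => isOG _ _ _ p
  | _, _, _, @allL _ _ _ F _ p => F.neutral ∧ isOG _ _ _ p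
  | _, _, _, exR _ p => isOG _ _ _ p
  | _, _, _, @exL _ _ _ F _ _ _ p => F.neutral ∧ isOG _ _ _ p
  | _, _, _, allR _ _ _ p => isOG _ _ _ p
  | _, _, _, @orLG _ _ _ _ F p q => F.neutral ∧ isOG _ _ _ p ∧ isOG _ _ _ q
  | _, _, _, @resG _ _ F p => F.neutral ∧ isOG _ _ _ p

/-- `hasOrL p B D S F` holds when an ∨-L rule with upper sequents `B,S → F`
and `D,S → F` and lower sequent `B∨D,S → F` occurs in the I_G-proof `p`. -/
def hasOrL : ∀ (G : Fm) (Γ : Multiset Fm) (W : Fm), IGProof G Γ W →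
    Fm → Fm → Multiset Fm → Fm → Prop
  | _, _, _, ax _, _, _, _, _ => False
  | _, _, _, contrL p, B, D, S, F => hasOrL _ _ _ p B D S F
  | _, _, _, botR p, B, D, S, F => hasOrL _ _ _ p B D S F
  | _, _, _, andL p, B, D, S, F => hasOrL _ _ _ p B D S F
  | _, _, _, andR p q, B, D, S, F => hasOrL _ _ _ p B D S F ∨ hasOrL _ _ _ q B D S F
  | _, _, _, @orL _ B' D' Γ' F' p q, B, D, S, F =>
      (B' = B ∧ D' = D ∧ Γ' = S ∧ F' = F) ∨ hasOrL _ _ _ p B D S F ∨ hasOrL _ _ _ q B D S F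
  | _, _, _, orR1 p, B, D, S, F => hasOrL _ _ _ p B D S F
  | _, _, _, orR2 p, B, D, S, F => hasOrL _ _ _ p B D S F
  | _, _, _, impL p q, B, D, S, F => hasOrL _ _ _ p B D S F ∨ hasOrL _ _ _ q B D S F
  | _, _, _, impR p, B, D, S, F => hasOrL _ _ _ p B D S F
  | _, _, _, allL _ p, B, D, S, F => hasOrL _ _ _ p B D S F
  | _, _, _, exR _ p, B, D, S, F => hasOrL _ _ _ p B D S F
  | _, _, _, exL _ _ _ p, B, D, S, F => hasOrL _ _ _ p B D S F
  | _, _, _, allR _ _ _ p, B, D, S, F => hasOrL _ _ _ p B D S F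
  | _, _, _, orLG p q, B, D, S, F => hasOrL _ _ _ p B D S F ∨ hasOrL _ _ _ q B D S F
  | _, _, _, resG p, B, D, S, F => hasOrL _ _ _ p B D S F

end IGProof

/-- In the simplified syntax, `A` ranges over atomic formulas together with
⊤ and ⊥. -/
def AtFm (F : Fm) : Prop := F.isAtom ∨ F = Fm.top ∨ F = Fm.bot

/-- `disjs A [B₁,…,Bₙ]` is the disjunction `A ∨ B₁ ∨ … ∨ Bₙ`. -/
def disjs (A : Fm) : List Fm → Fm
  | [] => A
  | B :: l => Fm.disj A (disjs B l)

mutual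
  /-- Goals in the simplified syntax: G ::= A | G∧G | G∨G | D⊃G | ∃x G. -/
  inductive Goal : Fm → Prop
    | atm {A : Fm} : AtFm A → Goal A
    | conj {a b : Fm} : Goal a → Goal b → Goal (Fm.conj a b)
    | disj {a b : Fm} : Goal a → Goal b → Goal (Fm.disj a b)
    | imp {a b : Fm} : PCl a → Goal b → Goal (Fm.imp a b)
    | ex {a : Fm} : Goal a → Goal (Fm.ex a)

  /-- Program clauses in the simplified syntax:
  D ::= (A∨…∨A) | G⊃(A∨…∨A) | ∀x D. -/
  inductive PCl : Fm → Prop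
    | head {A : Fm} {l : List Fm} : AtFm A → (∀ B ∈ l, AtFm B) → PCl (disjs A l)
    | impHead {g A : Fm} {l : List Fm} : Goal g → AtFm A → (∀ B ∈ l, AtFm B) →
        PCl (Fm.imp g (disjs A l))
    | all {d : Fm} : PCl d → PCl (Fm.all d)
end

/-- The instances `[D]` of a program clause `D`, as pairs whose first
component is `∅` (`none`) or `{G}` (`some G`) and whose second component is
the collection of head atoms. -/
inductive ClInst : Fm → Option Fm → Multiset Fm → Prop
  | head {A : Fm} {l : List Fm} : AtFm A → (∀ B ∈ l, AtFm B) →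
      ClInst (disjs A l) none (A ::ₘ (l : Multiset Fm))
  | impHead {g A : Fm} {l : List Fm} : Goal g → AtFm A → (∀ B ∈ l, AtFm B) →
      ClInst (Fm.imp g (disjs A l)) (some g) (A ::ₘ (l : Multiset Fm))
  | all {d : Fm} {o : Option Fm} {m : Multiset Fm} (t : Tm) :
      ClInst (d.inst t) o m → ClInst (Fm.all d) o m

/-- `[Γ]`: the instances of the clauses in `Γ`. -/
def GammaInst (Γ : Multiset Fm) (o : Option Fm) (m : Multiset Fm) : Prop :=
  ∃ D ∈ Γ, ClInst D o m

/-- The reduced proof system relative to the goal `G`: axioms `Δ → ⊤`, the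
rules RESTART, ATOMIC and BACKCHAIN relativized to `G`, and ∨-R, ∧-R, ⊃-R
and ∃-R. -/
inductive RP (G : Fm) : Multiset Fm → Fm → Prop
  | topAx {Γ : Multiset Fm} : RP G Γ Fm.top
  | restart {Γ : Multiset Fm} {C : Fm} (hC : C.isAtom ∨ C = Fm.bot) (p : RP G Γ G) :
      RP G Γ C
  | atomic {Γ : Multiset Fm} {C : Fm} {m : Multiset Fm} (hC : C.isAtom ∨ C = Fm.bot)
      (h : GammaInst Γ none (C ::ₘ m) ∨ GammaInst Γ none (Fm.bot ::ₘ m))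
      (ps : ∀ A ∈ m, RP G (A ::ₘ Γ) G) : RP G Γ C
  | backchain {Γ : Multiset Fm} {C G' : Fm} {m : Multiset Fm}
      (hC : C.isAtom ∨ C = Fm.bot)
      (h : GammaInst Γ (some G') (C ::ₘ m) ∨ GammaInst Γ (some G') (Fm.bot ::ₘ m))
      (p : RP G Γ G') (ps : ∀ A ∈ m, RP G (A ::ₘ Γ) G) : RP G Γ C
  | orR1 {Γ : Multiset Fm} {B D : Fm} (p : RP G Γ B) : RP G Γ (B.disj D)
  | orR2 {Γ : Multiset Fm} {B D : Fm} (p : RP G Γ D) : RP G Γ (B.disj D)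
  | andR {Γ : Multiset Fm} {B D : Fm} (p : RP G Γ B) (q : RP G Γ D) : RP G Γ (B.conj D)
  | impR {Γ : Multiset Fm} {B D : Fm} (p : RP G (B ::ₘ Γ) D) : RP G Γ (B.imp D)
  | exR {Γ : Multiset Fm} {B : Fm} (t : Tm) (p : RP G Γ (B.inst t)) : RP G Γ (Fm.ex B)
/-! ### Auxiliary machinery -/

deriving instance DecidableEq for Tm
deriving instance DecidableEq for Fm


/-- Map a function over the constants of a term. -/
def mapCT (g : ℕ → ℕ) : Tm → Tm
  | .var n => .var n
  | .const c => .const (g c)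

/-- Map a function over the constants of a formula. -/
def mapCF (g : ℕ → ℕ) : Fm → Fm
  | .top => .top
  | .bot => .bot
  | .atom p ts => .atom p (ts.map (mapCT g))
  | .conj x y => .conj (mapCF g x) (mapCF g y)
  | .disj x y => .disj (mapCF g x) (mapCF g y)
  | .imp x y => .imp (mapCF g x) (mapCF g y)
  | .ex x => .ex (mapCF g x)
  | .all x => .all (mapCF g x)

theorem mapCT_subst (g : ℕ → ℕ) (k : ℕ) (u : Tm) (t : Tm) :
    mapCT g (Tm.subst k u t) = Tm.subst k (mapCT g u) (mapCT g t) := by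
  cases t with
  | var n => simp only [Tm.subst]; split <;> simp [mapCT, Tm.subst, *]
  | const c => simp [mapCT, Tm.subst]

theorem mapCF_subst (g : ℕ → ℕ) (k : ℕ) (u : Tm) (X : Fm) :
    mapCF g (Fm.subst k u X) = Fm.subst k (mapCT g u) (mapCF g X) := by
  induction X generalizing k with
  | atom p ts => simp [mapCF, Fm.subst, List.map_map, Function.comp, mapCT_subst]
  | _ => simp_all [mapCF, Fm.subst]

theorem mapCF_inst (g : ℕ → ℕ) (u : Tm) (X : Fm) :
    mapCF g (Fm.inst u X) = Fm.inst (mapCT g u) (mapCF g X) :=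
  mapCF_subst g 0 u X

theorem constIn_mapCT (g : ℕ → ℕ) (e : ℕ) (t : Tm) :
    Tm.constIn e (mapCT g t) ↔ ∃ d, g d = e ∧ Tm.constIn d t := by
  cases t with
  | var n => simp [mapCT, Tm.constIn]
  | const c =>
    simp only [mapCT, Tm.constIn]
    constructor
    · intro h; exact ⟨c, h, rfl⟩
    · rintro ⟨d, h, rfl⟩; exact h

theorem constIn_mapCF (g : ℕ → ℕ) (e : ℕ) (X : Fm) :
    Fm.constIn e (mapCF g X) ↔ ∃ d, g d = e ∧ Fm.constIn d X := by
  induction X with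
  | top => simp [mapCF, Fm.constIn]
  | bot => simp [mapCF, Fm.constIn]
  | atom p ts =>
    simp only [mapCF, Fm.constIn, List.mem_map]
    constructor
    · rintro ⟨t, ⟨s, hs, rfl⟩, h⟩
      rcases (constIn_mapCT g e s).1 h with ⟨d, hd, hds⟩
      exact ⟨d, hd, s, hs, hds⟩
    · rintro ⟨d, hd, s, hs, hds⟩
      exact ⟨mapCT g s, ⟨s, hs, rfl⟩, (constIn_mapCT g e s).2 ⟨d, hd, hds⟩⟩
  | conj a b iha ihb => simp only [mapCF, Fm.constIn, iha, ihb, and_or_left, exists_or]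
  | disj a b iha ihb => simp only [mapCF, Fm.constIn, iha, ihb, and_or_left, exists_or]
  | imp a b iha ihb => simp only [mapCF, Fm.constIn, iha, ihb, and_or_left, exists_or]
  | ex a iha => simpa only [mapCF, Fm.constIn] using iha
  | all a iha => simpa only [mapCF, Fm.constIn] using iha

theorem mapCT_id (g : ℕ → ℕ) (t : Tm) (h : ∀ c, Tm.constIn c t → g c = c) :
    mapCT g t = t := by
  cases t with
  | var n => rfl
  | const c => simp [mapCT, h c rfl]

theorem mapCF_id (g : ℕ → ℕ) (X : Fm) (h : ∀ c, Fm.constIn c X → g c = c) :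
    mapCF g X = X := by
  induction X with
  | top => rfl
  | bot => rfl
  | atom p ts =>
    simp only [mapCF, Fm.atom.injEq, true_and]
    calc ts.map (mapCT g) = ts.map id := by
          apply List.map_congr_left
          intro t ht
          exact mapCT_id g t (fun c hc => h c ⟨t, ht, hc⟩)
      _ = ts := List.map_id ts
  | conj a b iha ihb =>
    have h1 := iha fun c hc => h c (Or.inl hc)
    have h2 := ihb fun c hc => h c (Or.inr hc)
    simp [mapCF, h1, h2]
  | disj a b iha ihb =>
    have h1 := iha fun c hc => h c (Or.inl hc)
    have h2 := ihb fun c hc => h c (Or.inr hc)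
    simp [mapCF, h1, h2]
  | imp a b iha ihb =>
    have h1 := iha fun c hc => h c (Or.inl hc)
    have h2 := ihb fun c hc => h c (Or.inr hc)
    simp [mapCF, h1, h2]
  | ex a iha => simp [mapCF, iha h]
  | all a iha => simp [mapCF, iha h]

theorem isAtom_mapCF (g : ℕ → ℕ) (X : Fm) : (mapCF g X).isAtom ↔ X.isAtom := by
  cases X <;> simp [mapCF, Fm.isAtom]

theorem mapCF_eq_top (g : ℕ → ℕ) (X : Fm) : mapCF g X = Fm.top ↔ X = Fm.top := by
  cases X <;> simp [mapCF]

theorem mapCF_eq_bot (g : ℕ → ℕ) (X : Fm) : mapCF g X = Fm.bot ↔ X = Fm.bot := by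
  cases X <;> simp [mapCF]

theorem axSeq_mapCF (g : ℕ → ℕ) {Γ Δ : Multiset Fm} (h : AxSeq Γ Δ) :
    AxSeq (Γ.map (mapCF g)) (Δ.map (mapCF g)) := by
  rcases h with htop | ⟨A, hA, hAΓ, hAΔ⟩
  · left
    have : mapCF g Fm.top = Fm.top := rfl
    exact this ▸ Multiset.mem_map_of_mem _ htop
  · right
    refine ⟨mapCF g A, ?_, Multiset.mem_map_of_mem _ hAΓ, Multiset.mem_map_of_mem _ hAΔ⟩
    rcases hA with rfl | hA
    · exact Or.inl rfl
    · exact Or.inr ((isAtom_mapCF g A).2 hA)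

/-! ### Freshness bounds -/

/-- A strict upper bound for the constants of a term. -/
def Tm.csup : Tm → ℕ
  | .var _ => 0
  | .const c => c + 1

/-- A strict upper bound for the constants of a formula. -/
def Fm.csup : Fm → ℕ
  | .top => 0
  | .bot => 0
  | .atom _ ts => (ts.map Tm.csup).sum
  | .conj x y => max x.csup y.csup
  | .disj x y => max x.csup y.csup
  | .imp x y => max x.csup y.csup
  | .ex x => x.csup
  | .all x => x.csup

theorem Tm.constIn_lt_csup {c : ℕ} {t : Tm} (h : t.constIn c) : c < t.csup := by
  cases t with
  | var n => exact absurd h id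
  | const d => simp only [Tm.constIn] at h; simp [Tm.csup, h, Nat.lt_succ_self]

theorem Fm.constIn_lt_csup {c : ℕ} {X : Fm} (h : X.constIn c) : c < X.csup := by
  induction X with
  | top => exact absurd h id
  | bot => exact absurd h id
  | atom p ts =>
    rcases h with ⟨t, ht, hc⟩
    calc c < t.csup := Tm.constIn_lt_csup hc
      _ ≤ (ts.map Tm.csup).sum := List.le_sum_of_mem (List.mem_map_of_mem (f := Tm.csup) ht)
  | conj a b iha ihb =>
    rcases h with h | h
    · exact lt_of_lt_of_le (iha h) (le_max_left _ _)
    · exact lt_of_lt_of_le (ihb h) (le_max_right _ _)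
  | disj a b iha ihb =>
    rcases h with h | h
    · exact lt_of_lt_of_le (iha h) (le_max_left _ _)
    · exact lt_of_lt_of_le (ihb h) (le_max_right _ _)
  | imp a b iha ihb =>
    rcases h with h | h
    · exact lt_of_lt_of_le (iha h) (le_max_left _ _)
    · exact lt_of_lt_of_le (ihb h) (le_max_right _ _)
  | ex a iha => exact iha h
  | all a iha => exact iha h

theorem Fm.not_constIn {c : ℕ} {X : Fm} (h : X.csup ≤ c) : ¬ X.constIn c :=
  fun hc => absurd (Fm.constIn_lt_csup hc) (not_lt.2 h)

/-- A strict upper bound for the constants of a multiset of formulas. -/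
def msup (Γ : Multiset Fm) : ℕ := (Γ.map Fm.csup).sum

theorem csup_le_msup {X : Fm} {Γ : Multiset Fm} (h : X ∈ Γ) : X.csup ≤ msup Γ := by
  unfold msup
  rw [← Multiset.cons_erase h, Multiset.map_cons, Multiset.sum_cons]
  exact Nat.le_add_right _ _

theorem not_constIn_msup {X : Fm} {Γ : Multiset Fm} {c : ℕ} (hm : X ∈ Γ) (h : msup Γ ≤ c) :
    ¬ X.constIn c :=
  Fm.not_constIn (le_trans (csup_le_msup hm) h)

/-! ### Swapping and renaming of constants -/

/-- Transposition of two natural numbers. -/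
def swN (a b n : ℕ) : ℕ := if n = a then b else if n = b then a else n

theorem swN_swN (a b n : ℕ) : swN a b (swN a b n) = n := by
  unfold swN; split_ifs <;> omega

/-- Renaming `a` to `b`. -/
def renN (a b n : ℕ) : ℕ := if n = a then b else n

theorem constIn_swF {a b e : ℕ} {X : Fm} :
    Fm.constIn e (mapCF (swN a b) X) ↔ Fm.constIn (swN a b e) X := by
  rw [constIn_mapCF]
  constructor
  · rintro ⟨d, rfl, hd⟩; rwa [swN_swN]
  · intro h; exact ⟨swN a b e, swN_swN a b e, h⟩

theorem constIn_renF {a b e : ℕ} {X : Fm} (h : Fm.constIn e (mapCF (renN a b) X)) :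
    Fm.constIn e X ∨ e = b := by
  rcases (constIn_mapCF _ _ _).1 h with ⟨d, hd, hdX⟩
  unfold renN at hd
  split_ifs at hd
  · exact Or.inr hd.symm
  · exact Or.inl (hd ▸ hdX)

theorem swF_id {a b : ℕ} {X : Fm} (ha : ¬ X.constIn a) (hb : ¬ X.constIn b) :
    mapCF (swN a b) X = X := by
  apply mapCF_id
  intro c hc
  unfold swN
  split_ifs with h1 h2
  · exact absurd (h1 ▸ hc) ha
  · exact absurd (h2 ▸ hc) hb
  · rfl

theorem renF_id {a b : ℕ} {X : Fm} (ha : ¬ X.constIn a) : mapCF (renN a b) X = X := by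
  apply mapCF_id
  intro c hc
  unfold renN
  split_ifs with h1
  · exact absurd (h1 ▸ hc) ha
  · rfl

theorem mapM_id {g : ℕ → ℕ} {Γ : Multiset Fm} (h : ∀ X ∈ Γ, mapCF g X = X) :
    Γ.map (mapCF g) = Γ := by
  rw [Multiset.map_congr rfl h, Multiset.map_id']

/-! ### The ordering ⪰ -/

theorem Fm.ge_trans {a b c : Fm} (h1 : Fm.ge a b) (h2 : Fm.ge b c) : Fm.ge a c := by
  induction h2 with
  | refl => exact h1
  | imp _ ih => exact Fm.ge.imp ih
  | disjl _ ih => exact Fm.ge.disjl ih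
  | disjr _ ih => exact Fm.ge.disjr ih
  | ex c _ ih => exact Fm.ge.ex c ih

/-! ### MsGe lemmas -/

theorem msge_refl (Γ : Multiset Fm) : MsGe Γ Γ := by
  refine ⟨Γ, le_refl _, ?_⟩
  induction Γ using Multiset.induction with
  | empty => exact Multiset.Rel.zero
  | cons a s ih => exact Multiset.Rel.cons (Fm.ge.refl a) ih

theorem msge_cons {Y X : Fm} {Γ₁ Γ₂ : Multiset Fm} (hYX : Fm.ge Y X) (h : MsGe Γ₁ Γ₂) :
    MsGe (Y ::ₘ Γ₁) (X ::ₘ Γ₂) := by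
  rcases h with ⟨Γ', hle, hrel⟩
  exact ⟨Y ::ₘ Γ', Multiset.cons_le_cons Y hle, Multiset.Rel.cons hYX hrel⟩

theorem msge_weaken (X : Fm) {Γ₁ Γ₂ : Multiset Fm} (h : MsGe Γ₁ Γ₂) : MsGe (X ::ₘ Γ₁) Γ₂ := by
  rcases h with ⟨Γ', hle, hrel⟩
  exact ⟨Γ', le_trans hle (Multiset.le_cons_self Γ₁ X), hrel⟩

theorem msge_cons_right {Γ₁ Γ₂ : Multiset Fm} {X : Fm} (h : MsGe Γ₁ (X ::ₘ Γ₂)) :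
    ∃ Y Γ₁', Γ₁ = Y ::ₘ Γ₁' ∧ Fm.ge Y X ∧ MsGe Γ₁' Γ₂ := by
  rcases h with ⟨Γ', hle, hrel⟩
  rcases Multiset.rel_cons_right.1 hrel with ⟨Y, Γ'', hYX, hrel', rfl⟩
  have hYmem : Y ∈ Γ₁ := Multiset.mem_of_le hle (Multiset.mem_cons_self Y Γ'')
  refine ⟨Y, Γ₁.erase Y, (Multiset.cons_erase hYmem).symm, hYX, Γ'', ?_, hrel'⟩
  have := Multiset.erase_le_erase Y hle
  rwa [Multiset.erase_cons_head] at this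

theorem exists_rel_of_le {X Y Z : Multiset Fm} (h : Multiset.Rel Fm.ge X Y) (hz : Z ≤ Y) :
    ∃ X' ≤ X, Multiset.Rel Fm.ge X' Z := by
  induction Z using Multiset.induction generalizing X Y with
  | empty => exact ⟨0, Multiset.zero_le _, Multiset.Rel.zero⟩
  | cons c Z' ih =>
    have hc : c ∈ Y := Multiset.mem_of_le hz (Multiset.mem_cons_self c Z')
    rw [← Multiset.cons_erase hc] at h
    rcases Multiset.rel_cons_right.1 h with ⟨x, X₀, hxc, hrel, rfl⟩
    have hz' : Z' ≤ Y.erase c := by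
      have := Multiset.erase_le_erase c hz
      rwa [Multiset.erase_cons_head] at this
    rcases ih hrel hz' with ⟨X', hX'le, hX'rel⟩
    exact ⟨x ::ₘ X', Multiset.cons_le_cons x hX'le, Multiset.Rel.cons hxc hX'rel⟩

theorem rel_ge_trans : ∀ {X Y Z : Multiset Fm}, Multiset.Rel Fm.ge X Y →
    Multiset.Rel Fm.ge Y Z → Multiset.Rel Fm.ge X Z := by
  intro X Y Z h1 h2
  induction h2 generalizing X with
  | zero => exact h1
  | @cons y z Y' Z' hyz hrel ih =>
    rcases Multiset.rel_cons_right.1 h1 with ⟨x, X', hxy, hrel', rfl⟩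
    exact Multiset.Rel.cons (Fm.ge_trans hxy hyz) (ih hrel')

theorem msge_trans {A B C : Multiset Fm} (h1 : MsGe A B) (h2 : MsGe B C) : MsGe A C := by
  rcases h1 with ⟨A', hA'le, hA'rel⟩
  rcases h2 with ⟨B', hB'le, hB'rel⟩
  rcases exists_rel_of_le hA'rel hB'le with ⟨A'', hA''le, hA''rel⟩
  exact ⟨A'', le_trans hA''le hA'le, rel_ge_trans hA''rel hB'rel⟩

/-! ### Swapping constants in proofs -/

theorem freshSeq_swF {c a b : ℕ} {Γ Δ : Multiset Fm} (h : FreshSeq c Γ Δ) :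
    FreshSeq (swN a b c) (Γ.map (mapCF (swN a b))) (Δ.map (mapCF (swN a b))) := by
  constructor
  · intro F hF
    rcases Multiset.mem_map.1 hF with ⟨X, hX, rfl⟩
    rw [constIn_swF, swN_swN]
    exact h.1 X hX
  · intro F hF
    rcases Multiset.mem_map.1 hF with ⟨X, hX, rfl⟩
    rw [constIn_swF, swN_swN]
    exact h.2 X hX


section
variable {G B D : Fm} {Γ : Multiset Fm} {F : Fm}

@[simp] theorem orLCount_ax (h : AxSeq Γ ({F} : Multiset Fm)) :
    (IGProof.ax (G := G) h).orLCount = 0 := by rw [IGProof.orLCount]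
@[simp] theorem orLCount_contrL (p : IGProof G (B ::ₘ B ::ₘ Γ) F) :
    (IGProof.contrL p).orLCount = p.orLCount := by rw [IGProof.orLCount]
@[simp] theorem orLCount_botR (p : IGProof G Γ Fm.bot) :
    (IGProof.botR (F := F) p).orLCount = p.orLCount := by rw [IGProof.orLCount]
@[simp] theorem orLCount_andL (p : IGProof G (B ::ₘ D ::ₘ (B.conj D) ::ₘ Γ) F) :
    (IGProof.andL p).orLCount = p.orLCount := by rw [IGProof.orLCount]
@[simp] theorem orLCount_andR (p : IGProof G Γ B) (q : IGProof G Γ D) :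
    (IGProof.andR p q).orLCount = p.orLCount + q.orLCount := by rw [IGProof.orLCount]
@[simp] theorem orLCount_orL (p : IGProof G (B ::ₘ Γ) F) (q : IGProof G (D ::ₘ Γ) F) :
    (IGProof.orL p q).orLCount = p.orLCount + q.orLCount + 1 := by rw [IGProof.orLCount]
@[simp] theorem orLCount_orR1 (p : IGProof G Γ B) :
    (IGProof.orR1 (D := D) p).orLCount = p.orLCount := by rw [IGProof.orLCount]
@[simp] theorem orLCount_orR2 (p : IGProof G Γ D) :
    (IGProof.orR2 (B := B) p).orLCount = p.orLCount := by rw [IGProof.orLCount]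
@[simp] theorem orLCount_impL (p : IGProof G ((B.imp D) ::ₘ Γ) B) (q : IGProof G (D ::ₘ Γ) F) :
    (IGProof.impL p q).orLCount = p.orLCount + q.orLCount := by rw [IGProof.orLCount]
@[simp] theorem orLCount_impR (p : IGProof G (B ::ₘ Γ) D) :
    (IGProof.impR p).orLCount = p.orLCount := by rw [IGProof.orLCount]
@[simp] theorem orLCount_allL (t : Tm) (p : IGProof G ((B.inst t) ::ₘ (Fm.all B) ::ₘ Γ) F) :
    (IGProof.allL t p).orLCount = p.orLCount := by rw [IGProof.orLCount]
@[simp] theorem orLCount_exR (t : Tm) (p : IGProof G Γ (B.inst t)) :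
    (IGProof.exR t p).orLCount = p.orLCount := by rw [IGProof.orLCount]
@[simp] theorem orLCount_exL (c : ℕ) (hc : FreshSeq c ((Fm.ex B) ::ₘ Γ) ({F} : Multiset Fm))
    (hG : ¬ G.constIn c) (p : IGProof G ((B.inst (Tm.const c)) ::ₘ Γ) F) :
    (IGProof.exL c hc hG p).orLCount = p.orLCount := by rw [IGProof.orLCount]
@[simp] theorem orLCount_allR (c : ℕ) (hc : FreshSeq c Γ ({Fm.all B} : Multiset Fm))
    (hG : ¬ G.constIn c) (p : IGProof G Γ (B.inst (Tm.const c))) :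
    (IGProof.allR c hc hG p).orLCount = p.orLCount := by rw [IGProof.orLCount]
@[simp] theorem orLCount_orLG (p : IGProof G (B ::ₘ Γ) F) (q : IGProof G (D ::ₘ Γ) G) :
    (IGProof.orLG p q).orLCount = p.orLCount + q.orLCount := by rw [IGProof.orLCount]
@[simp] theorem orLCount_resG (p : IGProof G Γ G) :
    (IGProof.resG (F := F) p).orLCount = p.orLCount := by rw [IGProof.orLCount]

@[simp] theorem height_ax (h : AxSeq Γ ({F} : Multiset Fm)) :
    (IGProof.ax (G := G) h).height = 1 := by rw [IGProof.height]
@[simp] theorem height_contrL (p : IGProof G (B ::ₘ B ::ₘ Γ) F) :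
    (IGProof.contrL p).height = p.height + 1 := by rw [IGProof.height]
@[simp] theorem height_botR (p : IGProof G Γ Fm.bot) :
    (IGProof.botR (F := F) p).height = p.height + 1 := by rw [IGProof.height]
@[simp] theorem height_andL (p : IGProof G (B ::ₘ D ::ₘ (B.conj D) ::ₘ Γ) F) :
    (IGProof.andL p).height = p.height + 1 := by rw [IGProof.height]
@[simp] theorem height_andR (p : IGProof G Γ B) (q : IGProof G Γ D) :
    (IGProof.andR p q).height = max p.height q.height + 1 := by rw [IGProof.height]
@[simp] theorem height_orL (p : IGProof G (B ::ₘ Γ) F) (q : IGProof G (D ::ₘ Γ) F) :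
    (IGProof.orL p q).height = max p.height q.height + 1 := by rw [IGProof.height]
@[simp] theorem height_orR1 (p : IGProof G Γ B) :
    (IGProof.orR1 (D := D) p).height = p.height + 1 := by rw [IGProof.height]
@[simp] theorem height_orR2 (p : IGProof G Γ D) :
    (IGProof.orR2 (B := B) p).height = p.height + 1 := by rw [IGProof.height]
@[simp] theorem height_impL (p : IGProof G ((B.imp D) ::ₘ Γ) B) (q : IGProof G (D ::ₘ Γ) F) :
    (IGProof.impL p q).height = max p.height q.height + 1 := by rw [IGProof.height]
@[simp] theorem height_impR (p : IGProof G (B ::ₘ Γ) D) :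
    (IGProof.impR p).height = p.height + 1 := by rw [IGProof.height]
@[simp] theorem height_allL (t : Tm) (p : IGProof G ((B.inst t) ::ₘ (Fm.all B) ::ₘ Γ) F) :
    (IGProof.allL t p).height = p.height + 1 := by rw [IGProof.height]
@[simp] theorem height_exR (t : Tm) (p : IGProof G Γ (B.inst t)) :
    (IGProof.exR t p).height = p.height + 1 := by rw [IGProof.height]
@[simp] theorem height_exL (c : ℕ) (hc : FreshSeq c ((Fm.ex B) ::ₘ Γ) ({F} : Multiset Fm))
    (hG : ¬ G.constIn c) (p : IGProof G ((B.inst (Tm.const c)) ::ₘ Γ) F) :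
    (IGProof.exL c hc hG p).height = p.height + 1 := by rw [IGProof.height]
@[simp] theorem height_allR (c : ℕ) (hc : FreshSeq c Γ ({Fm.all B} : Multiset Fm))
    (hG : ¬ G.constIn c) (p : IGProof G Γ (B.inst (Tm.const c))) :
    (IGProof.allR c hc hG p).height = p.height + 1 := by rw [IGProof.height]
@[simp] theorem height_orLG (p : IGProof G (B ::ₘ Γ) F) (q : IGProof G (D ::ₘ Γ) G) :
    (IGProof.orLG p q).height = max p.height q.height + 1 := by rw [IGProof.height]
@[simp] theorem height_resG (p : IGProof G Γ G) :
    (IGProof.resG (F := F) p).height = p.height + 1 := by rw [IGProof.height]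

end

theorem igCast {G Γ W Γ' W'} (hΓ : Γ' = Γ) (hW : W' = W) (p : IGProof G Γ W) :
    ∃ q : IGProof G Γ' W', q.orLCount = p.orLCount ∧ q.height = p.height := by
  subst hΓ; subst hW; exact ⟨p, rfl, rfl⟩

theorem swL {G : Fm} {Γ : Multiset Fm} {W : Fm} (p : IGProof G Γ W) (a b : ℕ) :
    ∃ q : IGProof (mapCF (swN a b) G) (Γ.map (mapCF (swN a b))) (mapCF (swN a b) W),
      q.orLCount = p.orLCount ∧ q.height = p.height := by
  set σ := mapCF (swN a b) with hσ
  induction p with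
  | @ax Γ F h =>
    have hax : AxSeq (Γ.map σ) ({σ F} : Multiset Fm) := by
      have := axSeq_mapCF (swN a b) h
      simpa using this
    exact ⟨IGProof.ax hax, by simp, by simp⟩
  | @contrL B Γ F p ih =>
    rcases ih with ⟨q, h1, h2⟩
    obtain ⟨q', e1, e2⟩ : ∃ q' : IGProof (σ G) (σ B ::ₘ σ B ::ₘ Γ.map σ) (σ F),
        q'.orLCount = q.orLCount ∧ q'.height = q.height := igCast (by simp) rfl q
    obtain ⟨qf, f1, f2⟩ : ∃ qf : IGProof (σ G) (Multiset.map σ (B ::ₘ Γ)) (σ F),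
        qf.orLCount = (IGProof.contrL q').orLCount ∧ qf.height = (IGProof.contrL q').height :=
      igCast (by simp) rfl (IGProof.contrL q')
    exact ⟨qf, by simp at f1 ⊢; omega, by simp at f2 ⊢; omega⟩
  | @botR Γ F p ih =>
    rcases ih with ⟨q, h1, h2⟩
    obtain ⟨q', e1, e2⟩ : ∃ q' : IGProof (σ G) (Γ.map σ) Fm.bot,
        q'.orLCount = q.orLCount ∧ q'.height = q.height := igCast rfl (by simp [hσ, mapCF]) q
    exact ⟨IGProof.botR q', by simp; omega, by simp; omega⟩
  | @andL B D Γ F p ih =>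
    rcases ih with ⟨q, h1, h2⟩
    obtain ⟨q', e1, e2⟩ : ∃ q' : IGProof (σ G) (σ B ::ₘ σ D ::ₘ (σ B).conj (σ D) ::ₘ Γ.map σ) (σ F),
        q'.orLCount = q.orLCount ∧ q'.height = q.height := igCast (by simp [hσ, mapCF]) rfl q
    obtain ⟨qf, f1, f2⟩ : ∃ qf : IGProof (σ G) (Multiset.map σ ((B.conj D) ::ₘ Γ)) (σ F),
        qf.orLCount = (IGProof.andL q').orLCount ∧ qf.height = (IGProof.andL q').height :=
      igCast (by simp [hσ, mapCF]) rfl (IGProof.andL q')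
    exact ⟨qf, by simp at f1 ⊢; omega, by simp at f2 ⊢; omega⟩
  | @andR B D Γ p q ihp ihq =>
    rcases ihp with ⟨q1, h1, h2⟩
    rcases ihq with ⟨q2, h3, h4⟩
    obtain ⟨qf, f1, f2⟩ : ∃ qf : IGProof (σ G) (Γ.map σ) (σ (B.conj D)),
        qf.orLCount = (IGProof.andR q1 q2).orLCount ∧
          qf.height = (IGProof.andR q1 q2).height :=
      igCast rfl (by simp [hσ, mapCF]) (IGProof.andR q1 q2)
    exact ⟨qf, by simp at f1 ⊢; omega, by simp at f2 ⊢; omega⟩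
  | @orL B D Γ F p q ihp ihq =>
    rcases ihp with ⟨q1, h1, h2⟩
    rcases ihq with ⟨q2, h3, h4⟩
    obtain ⟨q1', e1, e2⟩ : ∃ q' : IGProof (σ G) (σ B ::ₘ Γ.map σ) (σ F),
        q'.orLCount = q1.orLCount ∧ q'.height = q1.height := igCast (by simp) rfl q1
    obtain ⟨q2', e3, e4⟩ : ∃ q' : IGProof (σ G) (σ D ::ₘ Γ.map σ) (σ F),
        q'.orLCount = q2.orLCount ∧ q'.height = q2.height := igCast (by simp) rfl q2
    obtain ⟨qf, f1, f2⟩ : ∃ qf : IGProof (σ G) (Multiset.map σ ((B.disj D) ::ₘ Γ)) (σ F),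
        qf.orLCount = (IGProof.orL q1' q2').orLCount ∧
          qf.height = (IGProof.orL q1' q2').height :=
      igCast (by simp [hσ, mapCF]) rfl (IGProof.orL q1' q2')
    exact ⟨qf, by simp at f1 ⊢; omega, by simp at f2 ⊢; omega⟩
  | @orR1 B D Γ p ih =>
    rcases ih with ⟨q, h1, h2⟩
    obtain ⟨qf, f1, f2⟩ : ∃ qf : IGProof (σ G) (Γ.map σ) (σ (B.disj D)),
        qf.orLCount = (IGProof.orR1 (D := σ D) q).orLCount ∧
          qf.height = (IGProof.orR1 (D := σ D) q).height :=
      igCast rfl (by simp [hσ, mapCF]) (IGProof.orR1 (D := σ D) q)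
    exact ⟨qf, by simp at f1 ⊢; omega, by simp at f2 ⊢; omega⟩
  | @orR2 B D Γ p ih =>
    rcases ih with ⟨q, h1, h2⟩
    obtain ⟨qf, f1, f2⟩ : ∃ qf : IGProof (σ G) (Γ.map σ) (σ (B.disj D)),
        qf.orLCount = (IGProof.orR2 (B := σ B) q).orLCount ∧
          qf.height = (IGProof.orR2 (B := σ B) q).height :=
      igCast rfl (by simp [hσ, mapCF]) (IGProof.orR2 (B := σ B) q)
    exact ⟨qf, by simp at f1 ⊢; omega, by simp at f2 ⊢; omega⟩
  | @impL B D Γ F p q ihp ihq =>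
    rcases ihp with ⟨q1, h1, h2⟩
    rcases ihq with ⟨q2, h3, h4⟩
    obtain ⟨q1', e1, e2⟩ : ∃ q' : IGProof (σ G) ((σ B).imp (σ D) ::ₘ Γ.map σ) (σ B),
        q'.orLCount = q1.orLCount ∧ q'.height = q1.height := igCast (by simp [hσ, mapCF]) rfl q1
    obtain ⟨q2', e3, e4⟩ : ∃ q' : IGProof (σ G) (σ D ::ₘ Γ.map σ) (σ F),
        q'.orLCount = q2.orLCount ∧ q'.height = q2.height := igCast (by simp) rfl q2
    obtain ⟨qf, f1, f2⟩ : ∃ qf : IGProof (σ G) (Multiset.map σ ((B.imp D) ::ₘ Γ)) (σ F),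
        qf.orLCount = (IGProof.impL q1' q2').orLCount ∧
          qf.height = (IGProof.impL q1' q2').height :=
      igCast (by simp [hσ, mapCF]) rfl (IGProof.impL q1' q2')
    exact ⟨qf, by simp at f1 ⊢; omega, by simp at f2 ⊢; omega⟩
  | @impR B D Γ p ih =>
    rcases ih with ⟨q, h1, h2⟩
    obtain ⟨q', e1, e2⟩ : ∃ q' : IGProof (σ G) (σ B ::ₘ Γ.map σ) (σ D),
        q'.orLCount = q.orLCount ∧ q'.height = q.height := igCast (by simp) rfl q
    obtain ⟨qf, f1, f2⟩ : ∃ qf : IGProof (σ G) (Γ.map σ) (σ (B.imp D)),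
        qf.orLCount = (IGProof.impR q').orLCount ∧ qf.height = (IGProof.impR q').height :=
      igCast rfl (by simp [hσ, mapCF]) (IGProof.impR q')
    exact ⟨qf, by simp at f1 ⊢; omega, by simp at f2 ⊢; omega⟩
  | @allL B Γ F t p ih =>
    rcases ih with ⟨q, h1, h2⟩
    obtain ⟨q', e1, e2⟩ : ∃ q' : IGProof (σ G)
        ((σ B).inst (mapCT (swN a b) t) ::ₘ Fm.all (σ B) ::ₘ Γ.map σ) (σ F),
        q'.orLCount = q.orLCount ∧ q'.height = q.height :=
      igCast (by simp [hσ, mapCF, mapCF_inst]) rfl q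
    obtain ⟨qf, f1, f2⟩ : ∃ qf : IGProof (σ G) (Multiset.map σ ((Fm.all B) ::ₘ Γ)) (σ F),
        qf.orLCount = (IGProof.allL (mapCT (swN a b) t) q').orLCount ∧
          qf.height = (IGProof.allL (mapCT (swN a b) t) q').height :=
      igCast (by simp [hσ, mapCF]) rfl (IGProof.allL (mapCT (swN a b) t) q')
    exact ⟨qf, by simp at f1 ⊢; omega, by simp at f2 ⊢; omega⟩
  | @exR B Γ t p ih =>
    rcases ih with ⟨q, h1, h2⟩
    obtain ⟨q', e1, e2⟩ : ∃ q' : IGProof (σ G) (Γ.map σ) ((σ B).inst (mapCT (swN a b) t)),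
        q'.orLCount = q.orLCount ∧ q'.height = q.height :=
      igCast rfl (by simp [hσ, mapCF_inst]) q
    obtain ⟨qf, f1, f2⟩ : ∃ qf : IGProof (σ G) (Γ.map σ) (σ (Fm.ex B)),
        qf.orLCount = (IGProof.exR (mapCT (swN a b) t) q').orLCount ∧
          qf.height = (IGProof.exR (mapCT (swN a b) t) q').height :=
      igCast rfl (by simp [hσ, mapCF]) (IGProof.exR (mapCT (swN a b) t) q')
    exact ⟨qf, by simp at f1 ⊢; omega, by simp at f2 ⊢; omega⟩
  | @exL B Γ F c hc hG p ih =>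
    rcases ih with ⟨q, h1, h2⟩
    obtain ⟨q', e1, e2⟩ : ∃ q' : IGProof (σ G)
        ((σ B).inst (Tm.const (swN a b c)) ::ₘ Γ.map σ) (σ F),
        q'.orLCount = q.orLCount ∧ q'.height = q.height :=
      igCast (by simp [hσ, mapCF_inst, mapCT]) rfl q
    have hfr : FreshSeq (swN a b c) ((Fm.ex (σ B)) ::ₘ Γ.map σ) ({σ F} : Multiset Fm) := by
      have := freshSeq_swF (a := a) (b := b) hc
      simpa [hσ, mapCF] using this
    have hG' : ¬ (σ G).constIn (swN a b c) := by
      rw [hσ, constIn_swF, swN_swN]; exact hG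
    obtain ⟨qf, f1, f2⟩ : ∃ qf : IGProof (σ G) (Multiset.map σ ((Fm.ex B) ::ₘ Γ)) (σ F),
        qf.orLCount = (IGProof.exL (swN a b c) hfr hG' q').orLCount ∧
          qf.height = (IGProof.exL (swN a b c) hfr hG' q').height :=
      igCast (by simp [hσ, mapCF]) rfl (IGProof.exL (swN a b c) hfr hG' q')
    exact ⟨qf, by simp at f1 ⊢; omega, by simp at f2 ⊢; omega⟩
  | @allR B Γ c hc hG p ih =>
    rcases ih with ⟨q, h1, h2⟩
    obtain ⟨q', e1, e2⟩ : ∃ q' : IGProof (σ G) (Γ.map σ) ((σ B).inst (Tm.const (swN a b c))),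
        q'.orLCount = q.orLCount ∧ q'.height = q.height :=
      igCast rfl (by simp [hσ, mapCF_inst, mapCT]) q
    have hfr : FreshSeq (swN a b c) (Γ.map σ) ({Fm.all (σ B)} : Multiset Fm) := by
      have := freshSeq_swF (a := a) (b := b) hc
      simpa [hσ, mapCF] using this
    have hG' : ¬ (σ G).constIn (swN a b c) := by
      rw [hσ, constIn_swF, swN_swN]; exact hG
    obtain ⟨qf, f1, f2⟩ : ∃ qf : IGProof (σ G) (Γ.map σ) (σ (Fm.all B)),
        qf.orLCount = (IGProof.allR (swN a b c) hfr hG' q').orLCount ∧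
          qf.height = (IGProof.allR (swN a b c) hfr hG' q').height :=
      igCast rfl (by simp [hσ, mapCF]) (IGProof.allR (swN a b c) hfr hG' q')
    exact ⟨qf, by simp at f1 ⊢; omega, by simp at f2 ⊢; omega⟩
  | @orLG B D Γ F p q ihp ihq =>
    rcases ihp with ⟨q1, h1, h2⟩
    rcases ihq with ⟨q2, h3, h4⟩
    obtain ⟨q1', e1, e2⟩ : ∃ q' : IGProof (σ G) (σ B ::ₘ Γ.map σ) (σ F),
        q'.orLCount = q1.orLCount ∧ q'.height = q1.height := igCast (by simp) rfl q1
    obtain ⟨q2', e3, e4⟩ : ∃ q' : IGProof (σ G) (σ D ::ₘ Γ.map σ) (σ G),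
        q'.orLCount = q2.orLCount ∧ q'.height = q2.height := igCast (by simp) rfl q2
    obtain ⟨qf, f1, f2⟩ : ∃ qf : IGProof (σ G) (Multiset.map σ ((B.disj D) ::ₘ Γ)) (σ F),
        qf.orLCount = (IGProof.orLG q1' q2').orLCount ∧
          qf.height = (IGProof.orLG q1' q2').height :=
      igCast (by simp [hσ, mapCF]) rfl (IGProof.orLG q1' q2')
    exact ⟨qf, by simp at f1 ⊢; omega, by simp at f2 ⊢; omega⟩
  | @resG Γ F p ih =>
    rcases ih with ⟨q, h1, h2⟩
    exact ⟨IGProof.resG q, by simp; omega, by simp; omega⟩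

theorem igCast3 {G Γ W G' Γ' W'} (hG : G' = G) (hΓ : Γ' = Γ) (hW : W' = W) (p : IGProof G Γ W) :
    ∃ q : IGProof G' Γ' W', q.orLCount = p.orLCount ∧ q.height = p.height := by
  subst hG; subst hΓ; subst hW; exact ⟨p, rfl, rfl⟩

theorem renL {G : Fm} : ∀ (n : ℕ) {Γ : Multiset Fm} {W : Fm} (p : IGProof G Γ W),
    p.height ≤ n → ∀ a b : ℕ, ¬ G.constIn a →
    ∃ q : IGProof G (Γ.map (mapCF (renN a b))) (mapCF (renN a b) W),
      q.orLCount = p.orLCount ∧ q.height = p.height := by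
  intro n
  induction n with
  | zero => intro Γ W p hp _ _ _; exfalso; cases p <;> simp at hp
  | succ n ihn =>
    intro Γ W p hp a b hGa
    have hGren : mapCF (renN a b) G = G := renF_id hGa
    cases p with
    | @ax Γ F h =>
      have hax : AxSeq (Γ.map (mapCF (renN a b))) ({mapCF (renN a b) W} : Multiset Fm) := by
        have := axSeq_mapCF (renN a b) h
        simpa using this
      exact ⟨IGProof.ax hax, by simp, by simp⟩
    | @contrL B Γ F p =>
      have hp' : p.height ≤ n := by simp at hp; omega
      rcases ihn p hp' a b hGa with ⟨q, h1, h2⟩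
      obtain ⟨q', e1, e2⟩ : ∃ q' : IGProof G
          (mapCF (renN a b) B ::ₘ mapCF (renN a b) B ::ₘ Γ.map (mapCF (renN a b)))
          (mapCF (renN a b) W),
          q'.orLCount = q.orLCount ∧ q'.height = q.height := igCast (by simp) rfl q
      obtain ⟨qf, f1, f2⟩ : ∃ qf : IGProof G (Multiset.map (mapCF (renN a b)) (B ::ₘ Γ))
          (mapCF (renN a b) W),
          qf.orLCount = (IGProof.contrL q').orLCount ∧
            qf.height = (IGProof.contrL q').height :=
        igCast (by simp) rfl (IGProof.contrL q')
      exact ⟨qf, by simp at f1 ⊢; omega, by simp at f2 ⊢; omega⟩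
    | @botR Γ F p =>
      have hp' : p.height ≤ n := by simp at hp; omega
      rcases ihn p hp' a b hGa with ⟨q, h1, h2⟩
      obtain ⟨q', e1, e2⟩ : ∃ q' : IGProof G (Γ.map (mapCF (renN a b))) Fm.bot,
          q'.orLCount = q.orLCount ∧ q'.height = q.height := igCast rfl (by simp [mapCF]) q
      exact ⟨IGProof.botR q', by simp; omega, by simp; omega⟩
    | @andL B D Γ F p =>
      have hp' : p.height ≤ n := by simp at hp; omega
      rcases ihn p hp' a b hGa with ⟨q, h1, h2⟩
      obtain ⟨q', e1, e2⟩ : ∃ q' : IGProof G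
          (mapCF (renN a b) B ::ₘ mapCF (renN a b) D ::ₘ
            (mapCF (renN a b) B).conj (mapCF (renN a b) D) ::ₘ Γ.map (mapCF (renN a b)))
          (mapCF (renN a b) W),
          q'.orLCount = q.orLCount ∧ q'.height = q.height := igCast (by simp [mapCF]) rfl q
      obtain ⟨qf, f1, f2⟩ : ∃ qf : IGProof G (Multiset.map (mapCF (renN a b)) ((B.conj D) ::ₘ Γ))
          (mapCF (renN a b) W),
          qf.orLCount = (IGProof.andL q').orLCount ∧ qf.height = (IGProof.andL q').height :=
        igCast (by simp [mapCF]) rfl (IGProof.andL q')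
      exact ⟨qf, by simp at f1 ⊢; omega, by simp at f2 ⊢; omega⟩
    | @andR B D Γ p q =>
      have hp' : p.height ≤ n := by simp at hp; omega
      have hq' : q.height ≤ n := by simp at hp; omega
      rcases ihn p hp' a b hGa with ⟨q1, h1, h2⟩
      rcases ihn q hq' a b hGa with ⟨q2, h3, h4⟩
      obtain ⟨qf, f1, f2⟩ : ∃ qf : IGProof G (Γ.map (mapCF (renN a b)))
          (mapCF (renN a b) (B.conj D)),
          qf.orLCount = (IGProof.andR q1 q2).orLCount ∧
            qf.height = (IGProof.andR q1 q2).height :=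
        igCast rfl (by simp [mapCF]) (IGProof.andR q1 q2)
      exact ⟨qf, by simp at f1 ⊢; omega, by simp at f2 ⊢; omega⟩
    | @orL B D Γ F p q =>
      have hp' : p.height ≤ n := by simp at hp; omega
      have hq' : q.height ≤ n := by simp at hp; omega
      rcases ihn p hp' a b hGa with ⟨q1, h1, h2⟩
      rcases ihn q hq' a b hGa with ⟨q2, h3, h4⟩
      obtain ⟨q1', e1, e2⟩ : ∃ q' : IGProof G
          (mapCF (renN a b) B ::ₘ Γ.map (mapCF (renN a b))) (mapCF (renN a b) W),
          q'.orLCount = q1.orLCount ∧ q'.height = q1.height := igCast (by simp) rfl q1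
      obtain ⟨q2', e3, e4⟩ : ∃ q' : IGProof G
          (mapCF (renN a b) D ::ₘ Γ.map (mapCF (renN a b))) (mapCF (renN a b) W),
          q'.orLCount = q2.orLCount ∧ q'.height = q2.height := igCast (by simp) rfl q2
      obtain ⟨qf, f1, f2⟩ : ∃ qf : IGProof G (Multiset.map (mapCF (renN a b)) ((B.disj D) ::ₘ Γ))
          (mapCF (renN a b) W),
          qf.orLCount = (IGProof.orL q1' q2').orLCount ∧
            qf.height = (IGProof.orL q1' q2').height :=
        igCast (by simp [mapCF]) rfl (IGProof.orL q1' q2')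
      exact ⟨qf, by simp at f1 ⊢; omega, by simp at f2 ⊢; omega⟩
    | @orR1 B D Γ p =>
      have hp' : p.height ≤ n := by simp at hp; omega
      rcases ihn p hp' a b hGa with ⟨q, h1, h2⟩
      obtain ⟨qf, f1, f2⟩ : ∃ qf : IGProof G (Γ.map (mapCF (renN a b)))
          (mapCF (renN a b) (B.disj D)),
          qf.orLCount = (IGProof.orR1 (D := mapCF (renN a b) D) q).orLCount ∧
            qf.height = (IGProof.orR1 (D := mapCF (renN a b) D) q).height :=
        igCast rfl (by simp [mapCF]) (IGProof.orR1 (D := mapCF (renN a b) D) q)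
      exact ⟨qf, by simp at f1 ⊢; omega, by simp at f2 ⊢; omega⟩
    | @orR2 B D Γ p =>
      have hp' : p.height ≤ n := by simp at hp; omega
      rcases ihn p hp' a b hGa with ⟨q, h1, h2⟩
      obtain ⟨qf, f1, f2⟩ : ∃ qf : IGProof G (Γ.map (mapCF (renN a b)))
          (mapCF (renN a b) (B.disj D)),
          qf.orLCount = (IGProof.orR2 (B := mapCF (renN a b) B) q).orLCount ∧
            qf.height = (IGProof.orR2 (B := mapCF (renN a b) B) q).height :=
        igCast rfl (by simp [mapCF]) (IGProof.orR2 (B := mapCF (renN a b) B) q)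
      exact ⟨qf, by simp at f1 ⊢; omega, by simp at f2 ⊢; omega⟩
    | @impL B D Γ F p q =>
      have hp' : p.height ≤ n := by simp at hp; omega
      have hq' : q.height ≤ n := by simp at hp; omega
      rcases ihn p hp' a b hGa with ⟨q1, h1, h2⟩
      rcases ihn q hq' a b hGa with ⟨q2, h3, h4⟩
      obtain ⟨q1', e1, e2⟩ : ∃ q' : IGProof G
          ((mapCF (renN a b) B).imp (mapCF (renN a b) D) ::ₘ Γ.map (mapCF (renN a b)))
          (mapCF (renN a b) B),
          q'.orLCount = q1.orLCount ∧ q'.height = q1.height := igCast (by simp [mapCF]) rfl q1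
      obtain ⟨q2', e3, e4⟩ : ∃ q' : IGProof G
          (mapCF (renN a b) D ::ₘ Γ.map (mapCF (renN a b))) (mapCF (renN a b) W),
          q'.orLCount = q2.orLCount ∧ q'.height = q2.height := igCast (by simp) rfl q2
      obtain ⟨qf, f1, f2⟩ : ∃ qf : IGProof G (Multiset.map (mapCF (renN a b)) ((B.imp D) ::ₘ Γ))
          (mapCF (renN a b) W),
          qf.orLCount = (IGProof.impL q1' q2').orLCount ∧
            qf.height = (IGProof.impL q1' q2').height :=
        igCast (by simp [mapCF]) rfl (IGProof.impL q1' q2')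
      exact ⟨qf, by simp at f1 ⊢; omega, by simp at f2 ⊢; omega⟩
    | @impR B D Γ p =>
      have hp' : p.height ≤ n := by simp at hp; omega
      rcases ihn p hp' a b hGa with ⟨q, h1, h2⟩
      obtain ⟨q', e1, e2⟩ : ∃ q' : IGProof G
          (mapCF (renN a b) B ::ₘ Γ.map (mapCF (renN a b))) (mapCF (renN a b) D),
          q'.orLCount = q.orLCount ∧ q'.height = q.height := igCast (by simp) rfl q
      obtain ⟨qf, f1, f2⟩ : ∃ qf : IGProof G (Γ.map (mapCF (renN a b)))
          (mapCF (renN a b) (B.imp D)),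
          qf.orLCount = (IGProof.impR q').orLCount ∧ qf.height = (IGProof.impR q').height :=
        igCast rfl (by simp [mapCF]) (IGProof.impR q')
      exact ⟨qf, by simp at f1 ⊢; omega, by simp at f2 ⊢; omega⟩
    | @allL B Γ F t p =>
      have hp' : p.height ≤ n := by simp at hp; omega
      rcases ihn p hp' a b hGa with ⟨q, h1, h2⟩
      obtain ⟨q', e1, e2⟩ : ∃ q' : IGProof G
          ((mapCF (renN a b) B).inst (mapCT (renN a b) t) ::ₘ
            Fm.all (mapCF (renN a b) B) ::ₘ Γ.map (mapCF (renN a b))) (mapCF (renN a b) W),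
          q'.orLCount = q.orLCount ∧ q'.height = q.height :=
        igCast (by simp [mapCF, mapCF_inst]) rfl q
      obtain ⟨qf, f1, f2⟩ : ∃ qf : IGProof G (Multiset.map (mapCF (renN a b)) ((Fm.all B) ::ₘ Γ))
          (mapCF (renN a b) W),
          qf.orLCount = (IGProof.allL (mapCT (renN a b) t) q').orLCount ∧
            qf.height = (IGProof.allL (mapCT (renN a b) t) q').height :=
        igCast (by simp [mapCF]) rfl (IGProof.allL (mapCT (renN a b) t) q')
      exact ⟨qf, by simp at f1 ⊢; omega, by simp at f2 ⊢; omega⟩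
    | @exR B Γ t p =>
      have hp' : p.height ≤ n := by simp at hp; omega
      rcases ihn p hp' a b hGa with ⟨q, h1, h2⟩
      obtain ⟨q', e1, e2⟩ : ∃ q' : IGProof G (Γ.map (mapCF (renN a b)))
          ((mapCF (renN a b) B).inst (mapCT (renN a b) t)),
          q'.orLCount = q.orLCount ∧ q'.height = q.height :=
        igCast rfl (by simp [mapCF_inst]) q
      obtain ⟨qf, f1, f2⟩ : ∃ qf : IGProof G (Γ.map (mapCF (renN a b)))
          (mapCF (renN a b) (Fm.ex B)),
          qf.orLCount = (IGProof.exR (mapCT (renN a b) t) q').orLCount ∧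
            qf.height = (IGProof.exR (mapCT (renN a b) t) q').height :=
        igCast rfl (by simp [mapCF]) (IGProof.exR (mapCT (renN a b) t) q')
      exact ⟨qf, by simp at f1 ⊢; omega, by simp at f2 ⊢; omega⟩
    | @exL B Γ F c hc hGc p =>
      have hp' : p.height ≤ n := by simp at hp; omega
      obtain ⟨f, hfB, hfΓ, hfF, hfG, hfa, hfb⟩ : ∃ f, B.csup ≤ f ∧ msup Γ ≤ f ∧
          W.csup ≤ f ∧ G.csup ≤ f ∧ a < f ∧ b < f :=
        ⟨B.csup + msup Γ + W.csup + G.csup + a + b + 1, by omega, by omega, by omega,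
          by omega, by omega, by omega⟩
      have hcB : ¬ B.constIn c := by
        have := hc.1 (Fm.ex B) (Multiset.mem_cons_self _ _)
        simpa [Fm.constIn] using this
      have hcΓ : ∀ X ∈ Γ, ¬ X.constIn c := fun X hX =>
        hc.1 X (Multiset.mem_cons_of_mem hX)
      have hcF : ¬ W.constIn c := hc.2 W (Multiset.mem_singleton_self W)
      -- swap c and f in the premise
      rcases swL p c f with ⟨p1, c1, c2⟩
      obtain ⟨p2, d1, d2⟩ : ∃ p2 : IGProof G (B.inst (Tm.const f) ::ₘ Γ) W,
          p2.orLCount = p1.orLCount ∧ p2.height = p1.height := by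
        refine igCast3 (swF_id hGc (Fm.not_constIn hfG)).symm ?_ (swF_id hcF (Fm.not_constIn hfF)).symm p1
        rw [Multiset.map_cons, mapCF_inst]
        rw [swF_id hcB (Fm.not_constIn hfB)]
        rw [mapM_id (fun X hX => swF_id (hcΓ X hX)
          (not_constIn_msup hX hfΓ))]
        congr 1
        simp [mapCT, swN]
      have hp2 : p2.height ≤ n := by omega
      rcases ihn p2 hp2 a b hGa with ⟨q, h1, h2⟩
      have hfren : renN a b f = f := by unfold renN; exact if_neg (by omega)
      obtain ⟨q', e1, e2⟩ : ∃ q' : IGProof G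
          ((mapCF (renN a b) B).inst (Tm.const f) ::ₘ Γ.map (mapCF (renN a b)))
          (mapCF (renN a b) W),
          q'.orLCount = q.orLCount ∧ q'.height = q.height := by
        refine igCast ?_ rfl q
        rw [Multiset.map_cons, mapCF_inst]
        congr 2
        simp [mapCT, hfren]
      have hfr : FreshSeq f ((Fm.ex (mapCF (renN a b) B)) ::ₘ Γ.map (mapCF (renN a b)))
          ({mapCF (renN a b) W} : Multiset Fm) := by
        constructor
        · intro X hX
          rcases Multiset.mem_cons.1 hX with rfl | hX
          · intro hcon
            have : Fm.constIn f (mapCF (renN a b) (Fm.ex B)) := by simpa [mapCF] using hcon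
            rcases constIn_renF this with h | h
            · exact absurd (Fm.constIn_lt_csup h) (by simp [Fm.csup]; omega)
            · omega
          · rcases Multiset.mem_map.1 hX with ⟨Y, hY, rfl⟩
            intro hcon
            rcases constIn_renF hcon with h | h
            · exact absurd (Fm.constIn_lt_csup h)
                (not_lt.2 (le_trans (csup_le_msup hY) hfΓ))
            · omega
        · intro X hX
          rw [Multiset.mem_singleton] at hX
          subst hX
          intro hcon
          rcases constIn_renF hcon with h | h
          · exact absurd (Fm.constIn_lt_csup h) (by omega)
          · omega
      have hGf : ¬ G.constIn f := Fm.not_constIn hfG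
      obtain ⟨qf, f1, f2⟩ : ∃ qf : IGProof G (Multiset.map (mapCF (renN a b)) ((Fm.ex B) ::ₘ Γ))
          (mapCF (renN a b) W),
          qf.orLCount = (IGProof.exL f hfr hGf q').orLCount ∧
            qf.height = (IGProof.exL f hfr hGf q').height :=
        igCast (by simp [mapCF]) rfl (IGProof.exL f hfr hGf q')
      refine ⟨qf, ?_, ?_⟩
      · simp at f1 ⊢; omega
      · simp at f2 ⊢; omega
    | @allR B Γ c hc hGc p =>
      have hp' : p.height ≤ n := by simp at hp; omega
      obtain ⟨f, hfB, hfΓ, hfG, hfa, hfb⟩ : ∃ f, B.csup ≤ f ∧ msup Γ ≤ f ∧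
          G.csup ≤ f ∧ a < f ∧ b < f :=
        ⟨B.csup + msup Γ + G.csup + a + b + 1, by omega, by omega, by omega,
          by omega, by omega⟩
      have hcB : ¬ B.constIn c := by
        have := hc.2 (Fm.all B) (Multiset.mem_singleton_self _)
        simpa [Fm.constIn] using this
      have hcΓ : ∀ X ∈ Γ, ¬ X.constIn c := hc.1
      rcases swL p c f with ⟨p1, c1, c2⟩
      obtain ⟨p2, d1, d2⟩ : ∃ p2 : IGProof G Γ (B.inst (Tm.const f)),
          p2.orLCount = p1.orLCount ∧ p2.height = p1.height := by
        refine igCast3 (swF_id hGc (Fm.not_constIn hfG)).symm ?_ ?_ p1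
        · exact (mapM_id (fun X hX => swF_id (hcΓ X hX) (not_constIn_msup hX hfΓ))).symm
        · rw [mapCF_inst, swF_id hcB (Fm.not_constIn hfB)]
          congr 1
          simp [mapCT, swN]
      have hp2 : p2.height ≤ n := by omega
      rcases ihn p2 hp2 a b hGa with ⟨q, h1, h2⟩
      have hfren : renN a b f = f := by unfold renN; exact if_neg (by omega)
      obtain ⟨q', e1, e2⟩ : ∃ q' : IGProof G (Γ.map (mapCF (renN a b)))
          ((mapCF (renN a b) B).inst (Tm.const f)),
          q'.orLCount = q.orLCount ∧ q'.height = q.height := by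
        refine igCast rfl ?_ q
        rw [mapCF_inst]
        congr 2
        simp [mapCT, hfren]
      have hfr : FreshSeq f (Γ.map (mapCF (renN a b)))
          ({Fm.all (mapCF (renN a b) B)} : Multiset Fm) := by
        constructor
        · intro X hX
          rcases Multiset.mem_map.1 hX with ⟨Y, hY, rfl⟩
          intro hcon
          rcases constIn_renF hcon with h | h
          · exact absurd (Fm.constIn_lt_csup h)
              (not_lt.2 (le_trans (csup_le_msup hY) hfΓ))
          · omega
        · intro X hX
          rw [Multiset.mem_singleton] at hX
          subst hX
          intro hcon
          have : Fm.constIn f (mapCF (renN a b) (Fm.all B)) := by simpa [mapCF] using hcon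
          rcases constIn_renF this with h | h
          · exact absurd (Fm.constIn_lt_csup h) (by simp [Fm.csup]; omega)
          · omega
      have hGf : ¬ G.constIn f := Fm.not_constIn hfG
      obtain ⟨qf, f1, f2⟩ : ∃ qf : IGProof G (Γ.map (mapCF (renN a b)))
          (mapCF (renN a b) (Fm.all B)),
          qf.orLCount = (IGProof.allR f hfr hGf q').orLCount ∧
            qf.height = (IGProof.allR f hfr hGf q').height :=
        igCast rfl (by simp [mapCF]) (IGProof.allR f hfr hGf q')
      refine ⟨qf, ?_, ?_⟩
      · simp at f1 ⊢; omega
      · simp at f2 ⊢; omega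
    | @orLG B D Γ F p q =>
      have hp' : p.height ≤ n := by simp at hp; omega
      have hq' : q.height ≤ n := by simp at hp; omega
      rcases ihn p hp' a b hGa with ⟨q1, h1, h2⟩
      rcases ihn q hq' a b hGa with ⟨q2, h3, h4⟩
      obtain ⟨q1', e1, e2⟩ : ∃ q' : IGProof G
          (mapCF (renN a b) B ::ₘ Γ.map (mapCF (renN a b))) (mapCF (renN a b) W),
          q'.orLCount = q1.orLCount ∧ q'.height = q1.height := igCast (by simp) rfl q1
      obtain ⟨q2', e3, e4⟩ : ∃ q' : IGProof G
          (mapCF (renN a b) D ::ₘ Γ.map (mapCF (renN a b))) G,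
          q'.orLCount = q2.orLCount ∧ q'.height = q2.height :=
        igCast (by simp) hGren.symm q2
      obtain ⟨qf, f1, f2⟩ : ∃ qf : IGProof G (Multiset.map (mapCF (renN a b)) ((B.disj D) ::ₘ Γ))
          (mapCF (renN a b) W),
          qf.orLCount = (IGProof.orLG q1' q2').orLCount ∧
            qf.height = (IGProof.orLG q1' q2').height :=
        igCast (by simp [mapCF]) rfl (IGProof.orLG q1' q2')
      exact ⟨qf, by simp at f1 ⊢; omega, by simp at f2 ⊢; omega⟩
    | @resG Γ F p =>
      have hp' : p.height ≤ n := by simp at hp; omega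
      rcases ihn p hp' a b hGa with ⟨q, h1, h2⟩
      obtain ⟨q', e1, e2⟩ : ∃ q' : IGProof G (Γ.map (mapCF (renN a b))) G,
          q'.orLCount = q.orLCount ∧ q'.height = q.height := igCast rfl hGren.symm q
      exact ⟨IGProof.resG q', by simp; omega, by simp; omega⟩

/-! ### Inversion lemmas for ⪰ -/

theorem ge_eq_of_basic {Y A : Fm} (h : Fm.ge Y A) (hA : A = Fm.bot ∨ A.isAtom) : Y = A := by
  cases h with
  | refl => rfl
  | imp _ => rcases hA with h | h <;> simp [Fm.isAtom] at h
  | disjl _ => rcases hA with h | h <;> simp [Fm.isAtom] at h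
  | disjr _ => rcases hA with h | h <;> simp [Fm.isAtom] at h
  | ex _ _ => rcases hA with h | h <;> simp [Fm.isAtom] at h

theorem ge_conj {Y a b : Fm} (h : Fm.ge Y (Fm.conj a b)) : Y = Fm.conj a b := by
  cases h with
  | refl => rfl

theorem ge_all {Y a : Fm} (h : Fm.ge Y (Fm.all a)) : Y = Fm.all a := by
  cases h with
  | refl => rfl

theorem ge_imp {Y a b : Fm} (h : Fm.ge Y (Fm.imp a b)) : Y = Fm.imp a b ∨ Fm.ge Y b := by
  cases h with
  | refl => exact Or.inl rfl
  | imp h => exact Or.inr h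

theorem ge_disj {Y a b : Fm} (h : Fm.ge Y (Fm.disj a b)) :
    Y = Fm.disj a b ∨ Fm.ge Y a ∨ Fm.ge Y b := by
  cases h with
  | refl => exact Or.inl rfl
  | disjl h => exact Or.inr (Or.inl h)
  | disjr h => exact Or.inr (Or.inr h)

theorem ge_ex {Y a : Fm} (h : Fm.ge Y (Fm.ex a)) :
    Y = Fm.ex a ∨ ∃ c, Fm.ge Y (a.inst (Tm.const c)) := by
  cases h with
  | refl => exact Or.inl rfl
  | ex c h => exact Or.inr ⟨c, h⟩

/-! ### The strengthening lemma -/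

theorem strL {G : Fm} : ∀ (n : ℕ) {Γ₂ : Multiset Fm} {W : Fm} (p : IGProof G Γ₂ W),
    p.height ≤ n → ∀ Γ₁, MsGe Γ₁ Γ₂ → ∃ q : IGProof G Γ₁ W, q.orLCount ≤ p.orLCount := by
  intro n
  induction n with
  | zero => intro Γ₂ W p hp _ _; exfalso; cases p <;> simp at hp
  | succ n ihn =>
    intro Γ₂ W p hp Γ₁ h12
    cases p with
    | @ax Γ F h =>
      rcases h with htop | ⟨A, hA, hAΓ, hAΔ⟩
      · exact ⟨IGProof.ax (show AxSeq _ _ from Or.inl htop), by simp⟩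
      · rw [← Multiset.cons_erase hAΓ] at h12
        obtain ⟨Y, Γ₁', rfl, hY, hm⟩ := msge_cons_right h12
        obtain rfl : Y = A := ge_eq_of_basic hY hA
        exact ⟨IGProof.ax (show AxSeq _ _ from Or.inr ⟨Y, hA, Multiset.mem_cons_self _ _, hAΔ⟩), by simp⟩
    | @contrL B Γ F p =>
      have hp' : p.height ≤ n := by simp at hp; omega
      obtain ⟨Y, Γ₁', rfl, hY, hm⟩ := msge_cons_right h12
      obtain ⟨q, hq⟩ := ihn p hp' (Y ::ₘ Y ::ₘ Γ₁') (msge_cons hY (msge_cons hY hm))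
      exact ⟨IGProof.contrL q, by simp at hq ⊢; omega⟩
    | @botR Γ F p =>
      have hp' : p.height ≤ n := by simp at hp; omega
      obtain ⟨q, hq⟩ := ihn p hp' Γ₁ h12
      exact ⟨IGProof.botR q, by simp at hq ⊢; omega⟩
    | @andL B D Γ F p =>
      have hp' : p.height ≤ n := by simp at hp; omega
      obtain ⟨Y, Γ₁', rfl, hY, hm⟩ := msge_cons_right h12
      obtain rfl : Y = B.conj D := ge_conj hY
      obtain ⟨q, hq⟩ := ihn p hp' (B ::ₘ D ::ₘ (B.conj D) ::ₘ Γ₁')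
        (msge_cons (Fm.ge.refl B) (msge_cons (Fm.ge.refl D)
          (msge_cons (Fm.ge.refl _) hm)))
      exact ⟨IGProof.andL q, by simp at hq ⊢; omega⟩
    | @andR B D Γ p q =>
      have hp' : p.height ≤ n := by simp at hp; omega
      have hq' : q.height ≤ n := by simp at hp; omega
      obtain ⟨q1, hq1⟩ := ihn p hp' Γ₁ h12
      obtain ⟨q2, hq2⟩ := ihn q hq' Γ₁ h12
      exact ⟨IGProof.andR q1 q2, by simp at hq1 hq2 ⊢; omega⟩
    | @orL B D Γ F p q =>
      have hp' : p.height ≤ n := by simp at hp; omega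
      have hq' : q.height ≤ n := by simp at hp; omega
      obtain ⟨Y, Γ₁', rfl, hY, hm⟩ := msge_cons_right h12
      rcases ge_disj hY with rfl | hgB | hgD
      · obtain ⟨q1, hq1⟩ := ihn p hp' (B ::ₘ Γ₁') (msge_cons (Fm.ge.refl B) hm)
        obtain ⟨q2, hq2⟩ := ihn q hq' (D ::ₘ Γ₁') (msge_cons (Fm.ge.refl D) hm)
        exact ⟨IGProof.orL q1 q2, by simp at hq1 hq2 ⊢; omega⟩
      · obtain ⟨q1, hq1⟩ := ihn p hp' (Y ::ₘ Γ₁') (msge_cons hgB hm)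
        exact ⟨q1, by simp at hq1 ⊢; omega⟩
      · obtain ⟨q2, hq2⟩ := ihn q hq' (Y ::ₘ Γ₁') (msge_cons hgD hm)
        exact ⟨q2, by simp at hq2 ⊢; omega⟩
    | @orR1 B D Γ p =>
      have hp' : p.height ≤ n := by simp at hp; omega
      obtain ⟨q, hq⟩ := ihn p hp' Γ₁ h12
      exact ⟨IGProof.orR1 q, by simp at hq ⊢; omega⟩
    | @orR2 B D Γ p =>
      have hp' : p.height ≤ n := by simp at hp; omega
      obtain ⟨q, hq⟩ := ihn p hp' Γ₁ h12
      exact ⟨IGProof.orR2 q, by simp at hq ⊢; omega⟩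
    | @impL B D Γ F p q =>
      have hp' : p.height ≤ n := by simp at hp; omega
      have hq' : q.height ≤ n := by simp at hp; omega
      obtain ⟨Y, Γ₁', rfl, hY, hm⟩ := msge_cons_right h12
      rcases ge_imp hY with rfl | hgD
      · obtain ⟨q1, hq1⟩ := ihn p hp' ((B.imp D) ::ₘ Γ₁') (msge_cons (Fm.ge.refl _) hm)
        obtain ⟨q2, hq2⟩ := ihn q hq' (D ::ₘ Γ₁') (msge_cons (Fm.ge.refl D) hm)
        exact ⟨IGProof.impL q1 q2, by simp at hq1 hq2 ⊢; omega⟩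
      · obtain ⟨q2, hq2⟩ := ihn q hq' (Y ::ₘ Γ₁') (msge_cons hgD hm)
        exact ⟨q2, by simp at hq2 ⊢; omega⟩
    | @impR B D Γ p =>
      have hp' : p.height ≤ n := by simp at hp; omega
      obtain ⟨q, hq⟩ := ihn p hp' (B ::ₘ Γ₁) (msge_cons (Fm.ge.refl B) h12)
      exact ⟨IGProof.impR q, by simp at hq ⊢; omega⟩
    | @allL B Γ F t p =>
      have hp' : p.height ≤ n := by simp at hp; omega
      obtain ⟨Y, Γ₁', rfl, hY, hm⟩ := msge_cons_right h12
      obtain rfl : Y = Fm.all B := ge_all hY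
      obtain ⟨q, hq⟩ := ihn p hp' ((B.inst t) ::ₘ (Fm.all B) ::ₘ Γ₁')
        (msge_cons (Fm.ge.refl _) (msge_cons (Fm.ge.refl _) hm))
      exact ⟨IGProof.allL t q, by simp at hq ⊢; omega⟩
    | @exR B Γ t p =>
      have hp' : p.height ≤ n := by simp at hp; omega
      obtain ⟨q, hq⟩ := ihn p hp' Γ₁ h12
      exact ⟨IGProof.exR t q, by simp at hq ⊢; omega⟩
    | @exL B Γ F c hc hGc p =>
      have hp' : p.height ≤ n := by simp at hp; omega
      obtain ⟨Y, Γ₁', rfl, hY, hm⟩ := msge_cons_right h12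
      have hcB : ¬ B.constIn c := by
        have := hc.1 (Fm.ex B) (Multiset.mem_cons_self _ _)
        simpa [Fm.constIn] using this
      have hcΓ : ∀ X ∈ Γ, ¬ X.constIn c := fun X hX => hc.1 X (Multiset.mem_cons_of_mem hX)
      have hcW : ¬ W.constIn c := hc.2 W (Multiset.mem_singleton_self W)
      rcases ge_ex hY with rfl | ⟨e, hge⟩
      · -- Y = ex B : swap the eigenvariable to a fresh one and rebuild exL
        obtain ⟨f, hfB, hfΓ, hfW, hfG, hfΓ₁⟩ : ∃ f, B.csup ≤ f ∧ msup Γ ≤ f ∧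
            W.csup ≤ f ∧ G.csup ≤ f ∧ msup Γ₁' ≤ f :=
          ⟨B.csup + msup Γ + W.csup + G.csup + msup Γ₁' + 1, by omega, by omega, by omega,
            by omega, by omega⟩
        rcases swL p c f with ⟨p1, c1, c2⟩
        obtain ⟨p2, d1, d2⟩ : ∃ p2 : IGProof G (B.inst (Tm.const f) ::ₘ Γ) W,
            p2.orLCount = p1.orLCount ∧ p2.height = p1.height := by
          refine igCast3 (swF_id hGc (Fm.not_constIn hfG)).symm ?_
            (swF_id hcW (Fm.not_constIn hfW)).symm p1
          rw [Multiset.map_cons, mapCF_inst]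
          rw [swF_id hcB (Fm.not_constIn hfB)]
          rw [mapM_id (fun X hX => swF_id (hcΓ X hX) (not_constIn_msup hX hfΓ))]
          congr 1
          simp [mapCT, swN]
        have hp2 : p2.height ≤ n := by omega
        obtain ⟨q, hq⟩ := ihn p2 hp2 (B.inst (Tm.const f) ::ₘ Γ₁')
          (msge_cons (Fm.ge.refl _) hm)
        have hfr : FreshSeq f ((Fm.ex B) ::ₘ Γ₁') ({W} : Multiset Fm) := by
          constructor
          · intro X hX
            rcases Multiset.mem_cons.1 hX with rfl | hX
            · exact Fm.not_constIn (by simpa [Fm.csup] using hfB)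
            · exact not_constIn_msup hX hfΓ₁
          · intro X hX
            rw [Multiset.mem_singleton] at hX
            subst hX
            exact Fm.not_constIn hfW
        exact ⟨IGProof.exL f hfr (Fm.not_constIn hfG) q, by simp at hq ⊢; omega⟩
      · -- ge Y (B.inst (const e)) : rename the eigenvariable to e and drop exL
        rcases renL (p.height) p le_rfl c e hGc with ⟨q0, c1, c2⟩
        obtain ⟨p2, d1, d2⟩ : ∃ p2 : IGProof G (B.inst (Tm.const e) ::ₘ Γ) W,
            p2.orLCount = q0.orLCount ∧ p2.height = q0.height := by
          refine igCast ?_ (renF_id hcW).symm q0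
          rw [Multiset.map_cons, mapCF_inst]
          rw [renF_id hcB]
          rw [mapM_id (fun X hX => renF_id (hcΓ X hX))]
          congr 1
          simp [mapCT, renN]
        have hp2 : p2.height ≤ n := by omega
        obtain ⟨q, hq⟩ := ihn p2 hp2 (Y ::ₘ Γ₁') (msge_cons hge hm)
        exact ⟨q, by simp at hq ⊢; omega⟩
    | @allR B Γ c hc hGc p =>
      have hp' : p.height ≤ n := by simp at hp; omega
      have hcB : ¬ B.constIn c := by
        have := hc.2 (Fm.all B) (Multiset.mem_singleton_self _)
        simpa [Fm.constIn] using this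
      have hcΓ : ∀ X ∈ Γ₂, ¬ X.constIn c := hc.1
      obtain ⟨f, hfB, hfΓ, hfG, hfΓ₁⟩ : ∃ f, B.csup ≤ f ∧ msup Γ₂ ≤ f ∧
          G.csup ≤ f ∧ msup Γ₁ ≤ f :=
        ⟨B.csup + msup Γ₂ + G.csup + msup Γ₁ + 1, by omega, by omega, by omega, by omega⟩
      rcases swL p c f with ⟨p1, c1, c2⟩
      obtain ⟨p2, d1, d2⟩ : ∃ p2 : IGProof G Γ₂ (B.inst (Tm.const f)),
          p2.orLCount = p1.orLCount ∧ p2.height = p1.height := by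
        refine igCast3 (swF_id hGc (Fm.not_constIn hfG)).symm ?_ ?_ p1
        · exact (mapM_id (fun X hX => swF_id (hcΓ X hX) (not_constIn_msup hX hfΓ))).symm
        · rw [mapCF_inst, swF_id hcB (Fm.not_constIn hfB)]
          congr 1
          simp [mapCT, swN]
      have hp2 : p2.height ≤ n := by omega
      obtain ⟨q, hq⟩ := ihn p2 hp2 Γ₁ h12
      have hfr : FreshSeq f Γ₁ ({Fm.all B} : Multiset Fm) := by
        constructor
        · intro X hX
          exact not_constIn_msup hX hfΓ₁
        · intro X hX
          rw [Multiset.mem_singleton] at hX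
          subst hX
          exact Fm.not_constIn (by simpa [Fm.csup] using hfB)
      exact ⟨IGProof.allR f hfr (Fm.not_constIn hfG) q, by simp at hq ⊢; omega⟩
    | @orLG B D Γ F p q =>
      have hp' : p.height ≤ n := by simp at hp; omega
      have hq' : q.height ≤ n := by simp at hp; omega
      obtain ⟨Y, Γ₁', rfl, hY, hm⟩ := msge_cons_right h12
      rcases ge_disj hY with rfl | hgB | hgD
      · obtain ⟨q1, hq1⟩ := ihn p hp' (B ::ₘ Γ₁') (msge_cons (Fm.ge.refl B) hm)
        obtain ⟨q2, hq2⟩ := ihn q hq' (D ::ₘ Γ₁') (msge_cons (Fm.ge.refl D) hm)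
        exact ⟨IGProof.orLG q1 q2, by simp at hq1 hq2 ⊢; omega⟩
      · obtain ⟨q1, hq1⟩ := ihn p hp' (Y ::ₘ Γ₁') (msge_cons hgB hm)
        exact ⟨q1, by simp at hq1 ⊢; omega⟩
      · obtain ⟨q2, hq2⟩ := ihn q hq' (Y ::ₘ Γ₁') (msge_cons hgD hm)
        exact ⟨IGProof.resG q2, by simp at hq2 ⊢; omega⟩
    | @resG Γ F p =>
      have hp' : p.height ≤ n := by simp at hp; omega
      obtain ⟨q, hq⟩ := ihn p hp' Γ₁ h12
      exact ⟨IGProof.resG q, by simp at hq ⊢; omega⟩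

/-! ### hasOrL unfolding lemmas -/

section
variable {G B' D' B D : Fm} {Γ S : Multiset Fm} {F' F : Fm}

@[simp] theorem hasOrL_ax (h : AxSeq Γ ({F'} : Multiset Fm)) :
    IGProof.hasOrL _ _ _ (IGProof.ax (G := G) h) B D S F = False := by rw [IGProof.hasOrL]
@[simp] theorem hasOrL_contrL (p : IGProof G (B' ::ₘ B' ::ₘ Γ) F') :
    IGProof.hasOrL _ _ _ (IGProof.contrL p) B D S F = IGProof.hasOrL _ _ _ p B D S F := by rw [IGProof.hasOrL]
@[simp] theorem hasOrL_botR (p : IGProof G Γ Fm.bot) :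
    IGProof.hasOrL _ _ _ (IGProof.botR (F := F') p) B D S F = IGProof.hasOrL _ _ _ p B D S F := by rw [IGProof.hasOrL]
@[simp] theorem hasOrL_andL (p : IGProof G (B' ::ₘ D' ::ₘ (B'.conj D') ::ₘ Γ) F') :
    IGProof.hasOrL _ _ _ (IGProof.andL p) B D S F = IGProof.hasOrL _ _ _ p B D S F := by rw [IGProof.hasOrL]
@[simp] theorem hasOrL_andR (p : IGProof G Γ B') (q : IGProof G Γ D') :
    IGProof.hasOrL _ _ _ (IGProof.andR p q) B D S F = (IGProof.hasOrL _ _ _ p B D S F ∨ IGProof.hasOrL _ _ _ q B D S F) := by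
  rw [IGProof.hasOrL]
@[simp] theorem hasOrL_orL (p : IGProof G (B' ::ₘ Γ) F') (q : IGProof G (D' ::ₘ Γ) F') :
    IGProof.hasOrL _ _ _ (IGProof.orL p q) B D S F =
      ((B' = B ∧ D' = D ∧ Γ = S ∧ F' = F) ∨ IGProof.hasOrL _ _ _ p B D S F ∨ IGProof.hasOrL _ _ _ q B D S F) := by
  rw [IGProof.hasOrL]
@[simp] theorem hasOrL_orR1 (p : IGProof G Γ B') :
    IGProof.hasOrL _ _ _ (IGProof.orR1 (D := D') p) B D S F = IGProof.hasOrL _ _ _ p B D S F := by rw [IGProof.hasOrL]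
@[simp] theorem hasOrL_orR2 (p : IGProof G Γ D') :
    IGProof.hasOrL _ _ _ (IGProof.orR2 (B := B') p) B D S F = IGProof.hasOrL _ _ _ p B D S F := by rw [IGProof.hasOrL]
@[simp] theorem hasOrL_impL (p : IGProof G ((B'.imp D') ::ₘ Γ) B') (q : IGProof G (D' ::ₘ Γ) F') :
    IGProof.hasOrL _ _ _ (IGProof.impL p q) B D S F = (IGProof.hasOrL _ _ _ p B D S F ∨ IGProof.hasOrL _ _ _ q B D S F) := by
  rw [IGProof.hasOrL]
@[simp] theorem hasOrL_impR (p : IGProof G (B' ::ₘ Γ) D') :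
    IGProof.hasOrL _ _ _ (IGProof.impR p) B D S F = IGProof.hasOrL _ _ _ p B D S F := by rw [IGProof.hasOrL]
@[simp] theorem hasOrL_allL (t : Tm) (p : IGProof G ((B'.inst t) ::ₘ (Fm.all B') ::ₘ Γ) F') :
    IGProof.hasOrL _ _ _ (IGProof.allL t p) B D S F = IGProof.hasOrL _ _ _ p B D S F := by rw [IGProof.hasOrL]
@[simp] theorem hasOrL_exR (t : Tm) (p : IGProof G Γ (B'.inst t)) :
    IGProof.hasOrL _ _ _ (IGProof.exR t p) B D S F = IGProof.hasOrL _ _ _ p B D S F := by rw [IGProof.hasOrL]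
@[simp] theorem hasOrL_exL (c : ℕ) (hc : FreshSeq c ((Fm.ex B') ::ₘ Γ) ({F'} : Multiset Fm))
    (hG : ¬ G.constIn c) (p : IGProof G ((B'.inst (Tm.const c)) ::ₘ Γ) F') :
    IGProof.hasOrL _ _ _ (IGProof.exL c hc hG p) B D S F = IGProof.hasOrL _ _ _ p B D S F := by rw [IGProof.hasOrL]
@[simp] theorem hasOrL_allR (c : ℕ) (hc : FreshSeq c Γ ({Fm.all B'} : Multiset Fm))
    (hG : ¬ G.constIn c) (p : IGProof G Γ (B'.inst (Tm.const c))) :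
    IGProof.hasOrL _ _ _ (IGProof.allR c hc hG p) B D S F = IGProof.hasOrL _ _ _ p B D S F := by rw [IGProof.hasOrL]
@[simp] theorem hasOrL_orLG (p : IGProof G (B' ::ₘ Γ) F') (q : IGProof G (D' ::ₘ Γ) G) :
    IGProof.hasOrL _ _ _ (IGProof.orLG p q) B D S F = (IGProof.hasOrL _ _ _ p B D S F ∨ IGProof.hasOrL _ _ _ q B D S F) := by
  rw [IGProof.hasOrL]
@[simp] theorem hasOrL_resG (p : IGProof G Γ G) :
    IGProof.hasOrL _ _ _ (IGProof.resG (F := F') p) B D S F = IGProof.hasOrL _ _ _ p B D S F := by rw [IGProof.hasOrL]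

end

/-- A proof containing an ∨-L occurrence has at least one ∨-L. -/
theorem occPos {G B D : Fm} {S : Multiset Fm} {F : Fm} :
    ∀ {Γ W} (p : IGProof G Γ W), IGProof.hasOrL G Γ W p B D S F → 1 ≤ p.orLCount := by
  intro Γ W p
  induction p with
  | ax h => intro hocc; simp at hocc
  | contrL p ih => intro hocc; simp at hocc ⊢; have := ih hocc; omega
  | botR p ih => intro hocc; simp at hocc ⊢; have := ih hocc; omega
  | andL p ih => intro hocc; simp at hocc ⊢; have := ih hocc; omega
  | andR p q ihp ihq =>
    intro hocc; simp at hocc ⊢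
    rcases hocc with h | h
    · have := ihp h; omega
    · have := ihq h; omega
  | orL p q ihp ihq => intro hocc; simp
  | orR1 p ih => intro hocc; simp at hocc ⊢; have := ih hocc; omega
  | orR2 p ih => intro hocc; simp at hocc ⊢; have := ih hocc; omega
  | impL p q ihp ihq =>
    intro hocc; simp at hocc ⊢
    rcases hocc with h | h
    · have := ihp h; omega
    · have := ihq h; omega
  | impR p ih => intro hocc; simp at hocc ⊢; have := ih hocc; omega
  | allL t p ih => intro hocc; simp at hocc ⊢; have := ih hocc; omega
  | exR t p ih => intro hocc; simp at hocc ⊢; have := ih hocc; omega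
  | exL c hc hG p ih => intro hocc; simp at hocc ⊢; have := ih hocc; omega
  | allR c hc hG p ih => intro hocc; simp at hocc ⊢; have := ih hocc; omega
  | orLG p q ihp ihq =>
    intro hocc; simp at hocc ⊢
    rcases hocc with h | h
    · have := ihp h; omega
    · have := ihq h; omega
  | resG p ih => intro hocc; simp at hocc ⊢; have := ih hocc; omega

/-- The antecedent at an ∨-L occurrence is ⪰-stronger than the endsequent antecedent. -/
theorem occGe {G B D : Fm} {S : Multiset Fm} {F : Fm} :
    ∀ {Γ W} (p : IGProof G Γ W), IGProof.hasOrL G Γ W p B D S F →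
      MsGe ((B.disj D) ::ₘ S) Γ := by
  intro Γ W p
  induction p with
  | ax h => intro hocc; simp at hocc
  | @contrL B' Γ F' p ih =>
    intro hocc; simp at hocc
    exact msge_trans (ih hocc) (msge_cons (Fm.ge.refl B') (msge_weaken B' (msge_refl Γ)))
  | botR p ih => intro hocc; simp at hocc; exact ih hocc
  | @andL B' D' Γ F' p ih =>
    intro hocc; simp at hocc
    exact msge_trans (ih hocc) (msge_weaken B' (msge_weaken D' (msge_refl _)))
  | andR p q ihp ihq =>
    intro hocc; simp at hocc
    rcases hocc with h | h
    · exact ihp h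
    · exact ihq h
  | @orL B' D' Γ F' p q ihp ihq =>
    intro hocc; simp at hocc
    rcases hocc with ⟨rfl, rfl, rfl, rfl⟩ | h | h
    · exact msge_refl _
    · exact msge_trans (ihp h) (msge_cons (Fm.ge.disjl (Fm.ge.refl B')) (msge_refl Γ))
    · exact msge_trans (ihq h) (msge_cons (Fm.ge.disjr (Fm.ge.refl D')) (msge_refl Γ))
  | orR1 p ih => intro hocc; simp at hocc; exact ih hocc
  | orR2 p ih => intro hocc; simp at hocc; exact ih hocc
  | @impL B' D' Γ F' p q ihp ihq =>
    intro hocc; simp at hocc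
    rcases hocc with h | h
    · exact ihp h
    · exact msge_trans (ihq h) (msge_cons (Fm.ge.imp (Fm.ge.refl D')) (msge_refl Γ))
  | @impR B' D' Γ p ih =>
    intro hocc; simp at hocc
    exact msge_trans (ih hocc) (msge_weaken B' (msge_refl Γ))
  | @allL B' Γ F' t p ih =>
    intro hocc; simp at hocc
    exact msge_trans (ih hocc) (msge_weaken (B'.inst t) (msge_refl _))
  | exR t p ih => intro hocc; simp at hocc; exact ih hocc
  | @exL B' Γ F' c hc hG p ih =>
    intro hocc; simp at hocc
    exact msge_trans (ih hocc)
      (msge_cons (Fm.ge.ex c (Fm.ge.refl _)) (msge_refl Γ))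
  | allR c hc hG p ih => intro hocc; simp at hocc; exact ih hocc
  | @orLG B' D' Γ F' p q ihp ihq =>
    intro hocc; simp at hocc
    rcases hocc with h | h
    · exact msge_trans (ihp h) (msge_cons (Fm.ge.disjl (Fm.ge.refl B')) (msge_refl Γ))
    · exact msge_trans (ihq h) (msge_cons (Fm.ge.disjr (Fm.ge.refl D')) (msge_refl Γ))
  | resG p ih => intro hocc; simp at hocc; exact ih hocc

/-! ### D- and G-formulas are closed under substitution -/

theorem GD_subst (X : Fm) : ∀ (k : ℕ) (u : Tm),
    (GFm X → GFm (X.subst k u)) ∧ (DFm X → DFm (X.subst k u)) := by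
  induction X with
  | top => intro k u; simp only [Fm.subst]; exact ⟨fun _ => GFm.top, fun _ => DFm.top⟩
  | bot => intro k u; simp only [Fm.subst]; exact ⟨fun _ => GFm.bot, fun _ => DFm.bot⟩
  | atom p ts => intro k u; simp only [Fm.subst]; exact ⟨fun _ => GFm.atom, fun _ => DFm.atom⟩
  | conj a b iha ihb =>
    intro k u; simp only [Fm.subst]
    constructor
    · intro h; cases h with | conj ha hb => exact GFm.conj ((iha k u).1 ha) ((ihb k u).1 hb)
    · intro h; cases h with | conj ha hb => exact DFm.conj ((iha k u).2 ha) ((ihb k u).2 hb)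
  | disj a b iha ihb =>
    intro k u; simp only [Fm.subst]
    constructor
    · intro h; cases h with | disj ha hb => exact GFm.disj ((iha k u).1 ha) ((ihb k u).1 hb)
    · intro h; cases h with | disj ha hb => exact DFm.disj ((iha k u).2 ha) ((ihb k u).2 hb)
  | imp a b iha ihb =>
    intro k u; simp only [Fm.subst]
    constructor
    · intro h; cases h with | imp ha hb => exact GFm.imp ((iha k u).2 ha) ((ihb k u).1 hb)
    · intro h; cases h with | imp ha hb => exact DFm.imp ((iha k u).1 ha) ((ihb k u).2 hb)
  | ex a iha =>
    intro k u; simp only [Fm.subst]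
    constructor
    · intro h; cases h with | ex ha => exact GFm.ex ((iha (k+1) u).1 ha)
    · intro h; cases h with | ex ha => exact DFm.ex ((iha (k+1) u).2 ha)
  | all a iha =>
    intro k u; simp only [Fm.subst]
    constructor
    · intro h; cases h
    · intro h; cases h with | all ha => exact DFm.all ((iha (k+1) u).2 ha)

theorem GFm_inst {a : Fm} (h : GFm a) (t : Tm) : GFm (a.inst t) := (GD_subst a 0 t).1 h
theorem DFm_inst {a : Fm} (h : DFm a) (t : Tm) : DFm (a.inst t) := (GD_subst a 0 t).2 h

theorem dfm_cons {A : Fm} {Γ : Multiset Fm} (hA : DFm A) (h : ∀ X ∈ Γ, DFm X) :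
    ∀ X ∈ A ::ₘ Γ, DFm X := by
  intro X hX
  rcases Multiset.mem_cons.1 hX with rfl | hX
  · exact hA
  · exact h X hX

theorem dfm_tail {A : Fm} {Γ : Multiset Fm} (h : ∀ X ∈ A ::ₘ Γ, DFm X) : ∀ X ∈ Γ, DFm X :=
  fun X hX => h X (Multiset.mem_cons_of_mem hX)

/-! ### The main lemma -/

theorem mainL {G : Fm} (hG : GFm G) {B D : Fm} {S : Multiset Fm} {F : Fm} :
    ∀ {Γ W} (p : IGProof G Γ W), (∀ X ∈ Γ, DFm X) → GFm W →
      IGProof.hasOrL G Γ W p B D S F →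
      ∃ q : IGProof G (D ::ₘ S) W, q.orLCount < p.orLCount := by
  intro Γ W p
  induction p with
  | ax h => intro _ _ hocc; simp at hocc
  | @contrL B' Γ₀ W' p ih =>
    intro hΓ hW hocc
    simp at hocc
    have hB' : DFm B' := hΓ B' (Multiset.mem_cons_self _ _)
    obtain ⟨q, hq⟩ := ih (dfm_cons hB' hΓ) hW hocc
    exact ⟨q, by simp at hq ⊢; omega⟩
  | @botR Γ₀ W' p ih =>
    intro hΓ _ hocc
    simp at hocc
    obtain ⟨q, hq⟩ := ih hΓ GFm.bot hocc
    exact ⟨IGProof.botR q, by simp at hq ⊢; omega⟩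
  | @andL B' D' Γ₀ W' p ih =>
    intro hΓ hW hocc
    simp at hocc
    have hBD : DFm (B'.conj D') := hΓ _ (Multiset.mem_cons_self _ _)
    cases hBD with
    | conj h1 h2 =>
      obtain ⟨q, hq⟩ := ih (dfm_cons h1 (dfm_cons h2 hΓ)) hW hocc
      exact ⟨q, by simp at hq ⊢; omega⟩
  | @andR B' D' Γ₀ p q ihp ihq =>
    intro hΓ hW hocc
    simp at hocc
    cases hW with
    | conj hWB hWD =>
      rcases hocc with h | h
      · obtain ⟨q1, hq1⟩ := ihp hΓ hWB h
        have hmsge : MsGe (D ::ₘ S) Γ₀ :=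
          msge_trans (msge_cons (Fm.ge.disjr (Fm.ge.refl D)) (msge_refl S)) (occGe p h)
        obtain ⟨q2, hq2⟩ := strL q.height q le_rfl (D ::ₘ S) hmsge
        exact ⟨IGProof.andR q1 q2, by simp at hq1 hq2 ⊢; omega⟩
      · obtain ⟨q2, hq2⟩ := ihq hΓ hWD h
        have hmsge : MsGe (D ::ₘ S) Γ₀ :=
          msge_trans (msge_cons (Fm.ge.disjr (Fm.ge.refl D)) (msge_refl S)) (occGe q h)
        obtain ⟨q1, hq1⟩ := strL p.height p le_rfl (D ::ₘ S) hmsge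
        exact ⟨IGProof.andR q1 q2, by simp at hq1 hq2 ⊢; omega⟩
  | @orL B' D' Γ₀ W' p q ihp ihq =>
    intro hΓ hW hocc
    simp at hocc
    have hBD : DFm (B'.disj D') := hΓ _ (Multiset.mem_cons_self _ _)
    cases hBD with
    | disj h1 h2 =>
      rcases hocc with ⟨rfl, rfl, rfl, rfl⟩ | h | h
      · exact ⟨q, by simp⟩
      · obtain ⟨q1, hq1⟩ := ihp (dfm_cons h1 (dfm_tail hΓ)) hW h
        exact ⟨q1, by simp at hq1 ⊢; omega⟩
      · obtain ⟨q2, hq2⟩ := ihq (dfm_cons h2 (dfm_tail hΓ)) hW h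
        exact ⟨q2, by simp at hq2 ⊢; omega⟩
  | @orR1 B' D' Γ₀ p ih =>
    intro hΓ hW hocc
    simp at hocc
    cases hW with
    | disj hWB hWD =>
      obtain ⟨q, hq⟩ := ih hΓ hWB hocc
      exact ⟨IGProof.orR1 q, by simp at hq ⊢; omega⟩
  | @orR2 B' D' Γ₀ p ih =>
    intro hΓ hW hocc
    simp at hocc
    cases hW with
    | disj hWB hWD =>
      obtain ⟨q, hq⟩ := ih hΓ hWD hocc
      exact ⟨IGProof.orR2 q, by simp at hq ⊢; omega⟩
  | @impL B' D' Γ₀ W' p q ihp ihq =>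
    intro hΓ hW hocc
    simp at hocc
    have hBD : DFm (B'.imp D') := hΓ _ (Multiset.mem_cons_self _ _)
    cases hBD with
    | imp hgB hdD =>
      rcases hocc with h | h
      · obtain ⟨q1, hq1⟩ := ihp hΓ hgB h
        have hmsge : MsGe (D ::ₘ S) ((B'.imp D') ::ₘ Γ₀) :=
          msge_trans (msge_cons (Fm.ge.disjr (Fm.ge.refl D)) (msge_refl S)) (occGe p h)
        obtain ⟨Y, Θ, hDS, hY, hm⟩ := msge_cons_right hmsge
        have hpos : 1 ≤ p.orLCount := occPos p h
        rcases ge_imp hY with rfl | hgD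
        · obtain ⟨q2, hq2⟩ := strL q.height q le_rfl (D' ::ₘ Θ)
            (msge_cons (Fm.ge.refl D') hm)
          obtain ⟨q1', e1, e2⟩ : ∃ q1' : IGProof G ((B'.imp D') ::ₘ Θ) B',
              q1'.orLCount = q1.orLCount ∧ q1'.height = q1.height := igCast hDS.symm rfl q1
          obtain ⟨qf, f1, f2⟩ : ∃ qf : IGProof G (D ::ₘ S) W',
              qf.orLCount = (IGProof.impL q1' q2).orLCount ∧
                qf.height = (IGProof.impL q1' q2).height :=
            igCast hDS rfl (IGProof.impL q1' q2)
          exact ⟨qf, by simp at f1 ⊢; omega⟩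
        · obtain ⟨q2, hq2⟩ := strL q.height q le_rfl (Y ::ₘ Θ) (msge_cons hgD hm)
          obtain ⟨qf, f1, f2⟩ : ∃ qf : IGProof G (D ::ₘ S) W',
              qf.orLCount = q2.orLCount ∧ qf.height = q2.height := igCast hDS rfl q2
          exact ⟨qf, by simp; omega⟩
      · obtain ⟨q2, hq2⟩ := ihq (dfm_cons hdD (dfm_tail hΓ)) hW h
        exact ⟨q2, by simp at hq2 ⊢; omega⟩
  | @impR B' D' Γ₀ p ih =>
    intro hΓ hW hocc
    simp at hocc
    cases hW with
    | imp hd hg =>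
      obtain ⟨q1, hq1⟩ := ih (dfm_cons hd hΓ) hg hocc
      obtain ⟨q2, hq2⟩ := strL q1.height q1 le_rfl (B' ::ₘ D ::ₘ S)
        (msge_weaken B' (msge_refl _))
      exact ⟨IGProof.impR q2, by simp at hq1 hq2 ⊢; omega⟩
  | @allL B₀ Γ₀ W' t p ih =>
    intro hΓ hW hocc
    simp at hocc
    have hall : DFm (Fm.all B₀) := hΓ _ (Multiset.mem_cons_self _ _)
    cases hall with
    | all hd =>
      obtain ⟨q, hq⟩ := ih (dfm_cons (DFm_inst hd t) hΓ) hW hocc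
      exact ⟨q, by simp at hq ⊢; omega⟩
  | @exR B₀ Γ₀ t p ih =>
    intro hΓ hW hocc
    simp at hocc
    cases hW with
    | ex hg =>
      obtain ⟨q, hq⟩ := ih hΓ (GFm_inst hg t) hocc
      exact ⟨IGProof.exR t q, by simp at hq ⊢; omega⟩
  | @exL B₀ Γ₀ W' c hc hGc p ih =>
    intro hΓ hW hocc
    simp at hocc
    have hex : DFm (Fm.ex B₀) := hΓ _ (Multiset.mem_cons_self _ _)
    cases hex with
    | ex hd =>
      obtain ⟨q, hq⟩ := ih (dfm_cons (DFm_inst hd (Tm.const c)) (dfm_tail hΓ)) hW hocc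
      exact ⟨q, by simp at hq ⊢; omega⟩
  | @allR B₀ Γ₀ c hc hGc p ih =>
    intro hΓ hW hocc
    cases hW
  | @orLG B' D' Γ₀ W' p q ihp ihq =>
    intro hΓ hW hocc
    simp at hocc
    have hBD : DFm (B'.disj D') := hΓ _ (Multiset.mem_cons_self _ _)
    cases hBD with
    | disj h1 h2 =>
      rcases hocc with h | h
      · obtain ⟨q1, hq1⟩ := ihp (dfm_cons h1 (dfm_tail hΓ)) hW h
        exact ⟨q1, by simp at hq1 ⊢; omega⟩
      · obtain ⟨q2, hq2⟩ := ihq (dfm_cons h2 (dfm_tail hΓ)) hG h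
        exact ⟨IGProof.resG q2, by simp at hq2 ⊢; omega⟩
  | @resG Γ₀ W' p ih =>
    intro hΓ _ hocc
    simp at hocc
    obtain ⟨q, hq⟩ := ih hΓ hG hocc
    exact ⟨IGProof.resG q, by simp at hq ⊢; omega⟩

/-- Lemma `orltoorlg`: let `Γ` be a multiset of D-formulas
and `G` a G-formula, and let `Γ → G` have an I_G-proof `Ξ` in which an ∨-L
rule with upper sequents `B,Σ → F` and `D,Σ → F` (lower sequent `B∨D,Σ → F`)
appears. Then `D,Σ → G` has an I_G-proof with fewer occurrences of the ∨-L
rule than `Ξ`. -/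
theorem statement_10 (Γ : Multiset Fm) (G : Fm) (hΓ : ∀ X ∈ Γ, DFm X) (hG : GFm G)
    (p : IGProof G Γ G) (B D : Fm) (S : Multiset Fm) (F : Fm)
    (hocc : IGProof.hasOrL _ _ _ p B D S F) :
    ∃ q : IGProof G (D ::ₘ S) G, q.orLCount < p.orLCount := by
  exact mainL hG p hΓ hG hocc
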